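/- arXiv:2403.07629 — 5 statements merged into one kernel-verified Lean document; each statement's English description precedes it below -/
import Mathlib

section
/- For each odd n ≥ 1, write δ = (n−1)/2. In RLT_n, the number of ordered pairs (γ₁, γ₂) of 4-cycles through vertex 0 with V(γ₁)∩V(γ₂) = {0} equals (δ−2)(δ−1)δ(δ+1)(2δ−5)(8δ−3)/36. -/
/-!
Inclusion–exclusion over common vertices: two 3-sets `s, t` with `k = #(s ∩ t)` satisfy
`2·[s ∩ t = ∅] = 2 - 3k + k² - 2·[s = t]`. Summed over ordered pairs of 4-cycles through `0`
(each seen as the 3-set of its other vertices), the terms in `k` and `k²` become `∑ᵥ deg(v)²`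
and `∑ᵤ,ᵥ codeg(u, v)²`, where `codeg(u, v)` counts the cycles through `0`, `u` and `v`.

With `n = 2δ + 1`, such a cycle is an increasing triple `0 < a < b < c ≤ 2δ`. For `u < v`,
`codeg(u, v)` counts the admissible positions of the third vertex and is piecewise linear in
`(u, v)`; the degrees follow from `∑ᵥ codeg(u, v) = 3 deg(u)`, and negation in `ℤ/n` reduces
every sum to `u ≤ δ`. What is left are polynomial sums.
-/

/-- The dominance relation of the regular locally transitive tournament `RLT_n`
on `ZMod n` (for odd `n`). -/
def rltAdj (n : ℕ) (i j : ZMod n) : Prop :=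
  (j - i).val ∈ Finset.Icc 1 ((n - 1) / 2)

/-- An `m`-cycle through the vertex `0`, recorded as the injective cyclic sequence of
its vertices based at `0` (so each such cycle is recorded exactly once). -/
def IsBasedCycleAtZero (n m : ℕ) [NeZero m] (v : Fin m → ZMod n) : Prop :=
  v 0 = 0 ∧ Function.Injective v ∧ ∀ k, rltAdj n (v k) (v (k + 1))

open Finset

namespace Finset

section DisjointPairs

variable {α β : Type*} [DecidableEq α]

theorem sum_card_filter_mem_eq_sum_card (C : Finset β) (f : β → Finset α) {U : Finset α}
    (hU : ∀ t ∈ C, f t ⊆ U) :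
    ∑ v ∈ U, #{t ∈ C | v ∈ f t} = ∑ t ∈ C, #(f t) := by
  have := sum_card_bipartiteAbove_eq_sum_card_bipartiteBelow (s := U) (t := C)
    (r := fun v t => v ∈ f t)
  simp only [bipartiteAbove, bipartiteBelow, filter_mem_eq_inter] at this
  rw [this]
  exact sum_congr rfl fun t ht => by rw [inter_eq_right.mpr (hU t ht)]

theorem sum_sum_card_inter_eq_sum_sq (C : Finset β) (f : β → Finset α) {U : Finset α}
    (hU : ∀ t ∈ C, f t ⊆ U) :
    ∑ t ∈ C, ∑ t' ∈ C, #(f t ∩ f t') = ∑ v ∈ U, #{t ∈ C | v ∈ f t} ^ 2 := by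
  have hinter : ∀ t ∈ C, ∀ t' ∈ C,
      #(f t ∩ f t') = ∑ v ∈ U, (if v ∈ f t then 1 else 0) * (if v ∈ f t' then 1 else 0) := by
    intro t ht t' _
    simp only [boole_mul, ← ite_and, ← mem_inter]
    rw [← card_filter, filter_mem_eq_inter,
      inter_eq_right.mpr (inter_subset_left.trans (hU t ht))]
  simp_rw [card_filter, sq, sum_mul_sum]
  symm
  rw [sum_comm]
  refine sum_congr rfl fun t ht => ?_
  rw [sum_comm]
  exact sum_congr rfl fun t' ht' => (hinter t ht t' ht').symm

theorem two_mul_ite_disjoint_eq {s t : Finset α} (hs : #s = 3) (ht : #t = 3) :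
    2 * (if Disjoint s t then 1 else 0 : ℤ) =
      2 - 3 * #(s ∩ t) + #(s ∩ t) ^ 2 - 2 * (if s = t then 1 else 0) := by
  have hle : #(s ∩ t) ≤ 3 := hs ▸ card_le_card inter_subset_left
  have hdisj : Disjoint s t ↔ #(s ∩ t) = 0 := by
    rw [disjoint_iff_inter_eq_empty, card_eq_zero]
  have heq : s = t ↔ #(s ∩ t) = 3 := by
    refine ⟨fun h => by rw [h, inter_self, ht], fun h => ?_⟩
    exact (eq_of_subset_of_card_le inter_subset_left (by omega)).symm.trans
      (eq_of_subset_of_card_le inter_subset_right (by omega))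
  simp only [hdisj, heq]
  interval_cases #(s ∩ t) <;> norm_num

theorem two_mul_card_disjoint_pairs (C : Finset β) (f : β → Finset α) {U : Finset α}
    (hU : ∀ t ∈ C, f t ⊆ U) (hcard : ∀ t ∈ C, #(f t) = 3) (hinj : Set.InjOn f C) :
    2 * (#{p ∈ C ×ˢ C | Disjoint (f p.1) (f p.2)} : ℤ) =
      2 * #C ^ 2 - 3 * ∑ v ∈ U, (#{t ∈ C | v ∈ f t} : ℤ) ^ 2
        + ∑ u ∈ U, ∑ v ∈ U, (#{t ∈ C | u ∈ f t ∧ v ∈ f t} : ℤ) ^ 2 - 2 * #C := by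
  classical
  have hdeg : ∑ t ∈ C, ∑ t' ∈ C, (#(f t ∩ f t') : ℤ) = ∑ v ∈ U, (#{t ∈ C | v ∈ f t} : ℤ) ^ 2 := by
    exact_mod_cast sum_sum_card_inter_eq_sum_sq C f hU
  have hcodeg : ∑ t ∈ C, ∑ t' ∈ C, (#(f t ∩ f t') : ℤ) ^ 2 =
      ∑ u ∈ U, ∑ v ∈ U, (#{t ∈ C | u ∈ f t ∧ v ∈ f t} : ℤ) ^ 2 := by
    have := sum_sum_card_inter_eq_sum_sq C (fun t => f t ×ˢ f t)
      (fun t ht => product_subset_product (hU t ht) (hU t ht))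
    simp only [product_inter_product, card_product, ← sq, sum_product, mem_product] at this
    exact_mod_cast this
  have hdiag : ∑ t ∈ C, ∑ t' ∈ C, (if f t = f t' then 1 else 0 : ℤ) = #C := by
    rw [sum_congr rfl fun t ht => by
      rw [sum_congr rfl fun t' ht' => if_congr ⟨fun h => hinj ht ht' h, congrArg f⟩ rfl rfl,
        sum_ite_eq C t, if_pos ht], sum_const, nsmul_one]
  calc 2 * (#{p ∈ C ×ˢ C | Disjoint (f p.1) (f p.2)} : ℤ)
      = ∑ t ∈ C, ∑ t' ∈ C, 2 * (if Disjoint (f t) (f t') then 1 else 0 : ℤ) := by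
        rw [card_filter, Nat.cast_sum, mul_sum, sum_product]
        simp_rw [apply_ite Nat.cast, Nat.cast_one, Nat.cast_zero]
    _ = ∑ t ∈ C, ∑ t' ∈ C, (2 - 3 * #(f t ∩ f t') + (#(f t ∩ f t') : ℤ) ^ 2
          - 2 * (if f t = f t' then 1 else 0)) :=
        sum_congr rfl fun t ht => sum_congr rfl fun t' ht' =>
          two_mul_ite_disjoint_eq (hcard t ht) (hcard t' ht')
    _ = _ := by
        simp only [sum_sub_distrib, sum_add_distrib, ← mul_sum, sum_const, nsmul_eq_mul]
        rw [hdeg, hcodeg, hdiag]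
        ring

end DisjointPairs

theorem sum_Ioc_reflect {M : Type*} [AddCommMonoid M] (f : ℕ → M) {a b c : ℕ} (hab : a ≤ b)
    (hbc : b ≤ c) : ∑ v ∈ Ioc a b, f (c + 1 - v) = ∑ w ∈ Ioc (c - b) (c - a), f w := by
  apply sum_nbij' (fun v => c + 1 - v) (fun w => c + 1 - w) <;>
    intro v hv <;> simp only [mem_Ioc] at hv ⊢ <;> omega

theorem sum_Ioc_eq_two_nsmul_of_reflect {M : Type*} [AddCommMonoid M] (h : ℕ → M) (m : ℕ)
    (hsymm : ∀ v ∈ Ioc 0 (2 * m), h (2 * m + 1 - v) = h v) :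
    ∑ v ∈ Ioc 0 (2 * m), h v = 2 • ∑ v ∈ Ioc 0 m, h v := by
  have hupper : ∑ v ∈ Ioc m (2 * m), h v = ∑ v ∈ Ioc m (2 * m), h (2 * m + 1 - v) :=
    sum_congr rfl fun v hv => (hsymm v (Ioc_subset_Ioc_left (Nat.zero_le m) hv)).symm
  rw [sum_Ioc_reflect h (by omega) le_rfl, Nat.sub_self, show 2 * m - m = m by omega] at hupper
  rw [← sum_Ioc_consecutive _ (Nat.zero_le m) (by omega : m ≤ 2 * m), hupper, two_nsmul]

theorem sum_Ioc_eq_sub_of_succ (f F : ℕ → ℤ) (hF : ∀ x, F (x + 1) - F x = f (x + 1)) {a b : ℕ}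
    (hab : a ≤ b) : ∑ x ∈ Ioc a b, f x = F b - F a := by
  induction b, hab using Nat.le_induction with
  | base => simp
  | succ b hab ih => rw [sum_Ioc_succ_top hab, ih, ← hF]; ring

theorem two_mul_sum_Ioc_id {a b : ℕ} (hab : a ≤ b) :
    2 * ∑ x ∈ Ioc a b, (x : ℤ) = b * (b + 1) - a * (a + 1) := by
  rw [mul_sum, sum_Ioc_eq_sub_of_succ _ (fun x => (x : ℤ) * (x + 1))
    (fun x => by push_cast; ring) hab]

theorem six_mul_sum_Ioc_sq {a b : ℕ} (hab : a ≤ b) :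
    6 * ∑ x ∈ Ioc a b, (x : ℤ) ^ 2 = b * (b + 1) * (2 * b + 1) - a * (a + 1) * (2 * a + 1) := by
  rw [mul_sum, sum_Ioc_eq_sub_of_succ _ (fun x => (x : ℤ) * (x + 1) * (2 * x + 1))
    (fun x => by push_cast; ring) hab]

end Finset

namespace ZMod

theorem val_sub_eq_ite {n : ℕ} [NeZero n] (x y : ZMod n) :
    (y - x).val = if x.val ≤ y.val then y.val - x.val else y.val + n - x.val := by
  split_ifs with h
  · exact ZMod.val_sub h
  · have hxy : (x - y).val = x.val - y.val := ZMod.val_sub (by omega)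
    have hne : x - y ≠ 0 := by
      intro h0
      rw [h0, ZMod.val_zero] at hxy
      omega
    rw [← neg_sub, ZMod.neg_val, if_neg hne, hxy]
    have := ZMod.val_lt x
    omega

end ZMod

namespace RLT

/-- `(a, b, c)` encodes the cycle `0 → a → b → c → 0` of `RLT_(2δ+1)`, read on the
representatives `0, …, 2δ`: its arcs have lengths `a, b - a, c - b, 2δ + 1 - c ∈ [1, δ]`. -/
def cycleTriples (δ : ℕ) : Finset (ℕ × ℕ × ℕ) :=
  {t ∈ Icc 1 δ ×ˢ Icc 1 (2 * δ) ×ˢ Icc 1 (2 * δ) |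
    t.1 < t.2.1 ∧ t.2.1 ≤ t.1 + δ ∧ t.2.1 < t.2.2 ∧ t.2.2 ≤ t.2.1 + δ ∧ δ < t.2.2}

@[simp]
theorem mem_cycleTriples {δ a b c : ℕ} :
    (a, b, c) ∈ cycleTriples δ ↔
      1 ≤ a ∧ a ≤ δ ∧ a < b ∧ b ≤ a + δ ∧ b < c ∧ c ≤ b + δ ∧ δ < c ∧ c ≤ 2 * δ := by
  simp only [cycleTriples, mem_filter, mem_product, mem_Icc]
  omega

def verts (t : ℕ × ℕ × ℕ) : Finset ℕ := {t.1, t.2.1, t.2.2}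

@[simp]
theorem mem_verts {u a b c : ℕ} : u ∈ verts (a, b, c) ↔ u = a ∨ u = b ∨ u = c := by
  simp [verts]

theorem verts_subset {δ : ℕ} {t : ℕ × ℕ × ℕ} (ht : t ∈ cycleTriples δ) :
    verts t ⊆ Ioc 0 (2 * δ) := by
  obtain ⟨a, b, c⟩ := t
  intro u hu
  simp only [mem_cycleTriples, mem_verts, mem_Ioc] at ht hu ⊢
  omega

theorem card_verts {δ : ℕ} {t : ℕ × ℕ × ℕ} (ht : t ∈ cycleTriples δ) : #(verts t) = 3 := by
  obtain ⟨a, b, c⟩ := t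
  rw [mem_cycleTriples] at ht
  have : verts (a, b, c) = {a, b, c} := rfl
  rw [this, card_insert_of_notMem (by simp; omega), card_pair (by omega)]

theorem verts_injOn (δ : ℕ) : Set.InjOn verts (cycleTriples δ) := by
  rintro ⟨a, b, c⟩ ht ⟨a', b', c'⟩ ht' h
  simp only [mem_coe, mem_cycleTriples] at ht ht'
  have h1 : a ∈ verts (a', b', c') := h ▸ by simp
  have h2 : b ∈ verts (a', b', c') := h ▸ by simp
  have h3 : c ∈ verts (a', b', c') := h ▸ by simp
  have h1' : a' ∈ verts (a, b, c) := h.symm ▸ by simp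
  have h3' : c' ∈ verts (a, b, c) := h.symm ▸ by simp
  simp only [mem_verts] at h1 h2 h3 h1' h3'
  simp only [Prod.mk.injEq]
  omega

def codeg (δ u v : ℕ) : ℕ := #{t ∈ cycleTriples δ | u ∈ verts t ∧ v ∈ verts t}

theorem codeg_comm (δ u v : ℕ) : codeg δ u v = codeg δ v u := by
  simp only [codeg, and_comm]

theorem codeg_self (δ v : ℕ) : codeg δ v v = #{t ∈ cycleTriples δ | v ∈ verts t} := by
  simp only [codeg, and_self]

/-- Negation `x ↦ -x` of `ℤ/(2δ+1)` reverses every arc, so it maps the cycle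
`0 → a → b → c → 0` to the cycle `0 → -c → -b → -a → 0`. -/
def reflect (δ : ℕ) (t : ℕ × ℕ × ℕ) : ℕ × ℕ × ℕ :=
  (2 * δ + 1 - t.2.2, 2 * δ + 1 - t.2.1, 2 * δ + 1 - t.1)

theorem codeg_reflect {δ u v : ℕ} (hu : u ∈ Ioc 0 (2 * δ)) (hv : v ∈ Ioc 0 (2 * δ)) :
    codeg δ (2 * δ + 1 - u) (2 * δ + 1 - v) = codeg δ u v := by
  rw [mem_Ioc] at hu hv
  apply card_nbij' (reflect δ) (reflect δ) <;>
  · rintro ⟨a, b, c⟩ ht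
    simp only [mem_coe, mem_filter, mem_cycleTriples, mem_verts, reflect, Prod.mk.injEq] at ht ⊢
    omega

def thirdVertices (δ u v : ℕ) : Finset ℕ :=
  {w ∈ Ioc 0 (2 * δ) | (w < u ∧ (w, u, v) ∈ cycleTriples δ) ∨
    (u < w ∧ w < v ∧ (u, w, v) ∈ cycleTriples δ) ∨ (v < w ∧ (u, v, w) ∈ cycleTriples δ)}

theorem codeg_eq_card_thirdVertices {δ u v : ℕ} (huv : u < v) :
    codeg δ u v = #(thirdVertices δ u v) := by
  apply card_nbij' (fun t => t.1 + t.2.1 + t.2.2 - u - v)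
    (fun w => if w < u then (w, u, v) else if w < v then (u, w, v) else (u, v, w))
  · rintro ⟨a, b, c⟩ ht
    simp only [thirdVertices, mem_coe, mem_filter, mem_cycleTriples, mem_verts, mem_Ioc] at ht ⊢
    omega
  · intro w hw
    simp only [thirdVertices, mem_coe, mem_filter, mem_cycleTriples, mem_Ioc] at hw
    dsimp only
    split_ifs <;>
      simp only [mem_coe, mem_filter, mem_cycleTriples, mem_verts, true_or, or_true, and_true] <;>
      omega
  · rintro ⟨a, b, c⟩ ht
    simp only [mem_coe, mem_filter, mem_cycleTriples, mem_verts] at ht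
    dsimp only
    split_ifs <;> simp only [Prod.mk.injEq] <;> omega
  · intro w hw
    simp only [thirdVertices, mem_coe, mem_filter, mem_cycleTriples, mem_Ioc] at hw
    dsimp only
    split_ifs <;> dsimp only <;> omega

theorem codeg_of_lt_of_le_half {δ u v : ℕ} (hu : 1 ≤ u) (huv : u < v) (hv : v ≤ δ) :
    codeg δ u v = v := by
  have hthird : thirdVertices δ u v = Ioc δ (v + δ) := by
    ext w
    simp only [thirdVertices, mem_filter, mem_cycleTriples, mem_Ioc]
    omega
  rw [codeg_eq_card_thirdVertices huv, hthird, Nat.card_Ioc]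
  omega

/-- Every third vertex works here: it splits an arc of the cycle `0 → u → v → 0`, whose arcs
already have length at most `δ`. -/
theorem codeg_of_le_half_lt_of_le_add {δ u v : ℕ} (hu : 1 ≤ u) (huδ : u ≤ δ) (hv : δ < v)
    (hvu : v ≤ u + δ) : codeg δ u v = 2 * δ - 2 := by
  have hthird : thirdVertices δ u v = Ioc 0 (2 * δ) \ {u, v} := by
    ext w
    simp only [thirdVertices, mem_filter, mem_cycleTriples, mem_Ioc, mem_sdiff, mem_insert,
      mem_singleton]
    omega
  have hsub : {u, v} ⊆ Ioc 0 (2 * δ) := by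
    intro w hw
    simp only [mem_insert, mem_singleton, mem_Ioc] at hw ⊢
    omega
  rw [codeg_eq_card_thirdVertices (by omega), hthird, card_sdiff_of_subset hsub, Nat.card_Ioc,
    card_pair (by omega)]
  omega

theorem codeg_of_add_half_lt {δ u v : ℕ} (hu : 1 ≤ u) (huδ : u ≤ δ) (huv : u + δ < v)
    (hv : v ≤ 2 * δ) : codeg δ u v = u + 2 * δ + 1 - v := by
  have hthird : thirdVertices δ u v = Ioc (v - δ - 1) (u + δ) := by
    ext w
    simp only [thirdVertices, mem_filter, mem_cycleTriples, mem_Ioc]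
    omega
  rw [codeg_eq_card_thirdVertices (by omega), hthird, Nat.card_Ioc]
  omega

theorem sum_codeg_eq_three_mul (δ u : ℕ) : ∑ v ∈ Ioc 0 (2 * δ), codeg δ u v = 3 * codeg δ u u := by
  have := sum_card_filter_mem_eq_sum_card {t ∈ cycleTriples δ | u ∈ verts t} verts
    (fun t ht => verts_subset (mem_filter.mp ht).1)
  simp only [filter_filter] at this
  unfold codeg
  rw [this, sum_const_nat fun t ht => card_verts (mem_filter.mp ht).1, mul_comm]
  simp only [and_self]

theorem sum_comp_codeg (F : ℕ → ℤ) {δ u : ℕ} (hu : 1 ≤ u) (huδ : u ≤ δ) :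
    ∑ v ∈ Ioc 0 (2 * δ), F (codeg δ u v) =
      (u - 1) * F u + F (codeg δ u u) + 2 * ∑ w ∈ Ioc u δ, F w + u * F (2 * δ - 2) := by
  have hbelow : ∑ v ∈ Ioc 0 (u - 1), F (codeg δ u v) = ∑ _v ∈ Ioc 0 (u - 1), F u :=
    sum_congr rfl fun v hv => by
      rw [mem_Ioc] at hv; rw [codeg_comm, codeg_of_lt_of_le_half hv.1 (by omega) huδ]
  have hnear : ∑ v ∈ Ioc u δ, F (codeg δ u v) = ∑ w ∈ Ioc u δ, F w :=
    sum_congr rfl fun v hv => by rw [mem_Ioc] at hv; rw [codeg_of_lt_of_le_half hu hv.1 hv.2]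
  have hmid : ∑ v ∈ Ioc δ (u + δ), F (codeg δ u v) = ∑ _v ∈ Ioc δ (u + δ), F (2 * δ - 2) :=
    sum_congr rfl fun v hv => by
      rw [mem_Ioc] at hv; rw [codeg_of_le_half_lt_of_le_add hu huδ hv.1 hv.2]
  have hfar : ∑ v ∈ Ioc (u + δ) (2 * δ), F (codeg δ u v) =
      ∑ v ∈ Ioc (u + δ) (2 * δ), F (u + 2 * δ + 1 - v) :=
    sum_congr rfl fun v hv => by rw [mem_Ioc] at hv; rw [codeg_of_add_half_lt hu huδ hv.1 hv.2]
  rw [sum_Ioc_reflect F (by omega) (by omega), show u + 2 * δ - 2 * δ = u by omega,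
    show u + 2 * δ - (u + δ) = δ by omega] at hfar
  rw [← sum_Ioc_consecutive _ (Nat.zero_le (u - 1)) (by omega : u - 1 ≤ 2 * δ),
    ← sum_Ioc_consecutive _ (by omega : u - 1 ≤ u) (by omega : u ≤ 2 * δ),
    ← sum_Ioc_consecutive _ huδ (by omega : δ ≤ 2 * δ),
    ← sum_Ioc_consecutive _ (by omega : δ ≤ u + δ) (by omega : u + δ ≤ 2 * δ),
    hbelow, hnear, hmid, hfar, show Ioc (u - 1) u = {u} by ext; simp; omega, sum_singleton]
  simp only [sum_const, Nat.card_Ioc, Nat.sub_zero, Nat.add_sub_cancel, nsmul_eq_mul]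
  push_cast [Nat.cast_sub hu]
  ring

theorem two_mul_codeg_self {δ u : ℕ} (hu : 1 ≤ u) (huδ : u ≤ δ) :
    2 * (codeg δ u u : ℤ) = δ * (δ + 1) + 2 * u * (δ - 2) := by
  have hrow := sum_comp_codeg (fun k => (k : ℤ)) hu huδ
  have hsum : ∑ v ∈ Ioc 0 (2 * δ), (codeg δ u v : ℤ) = 3 * codeg δ u u := by
    exact_mod_cast sum_codeg_eq_three_mul δ u
  have hnear := two_mul_sum_Ioc_id huδ
  push_cast [Nat.cast_sub (by omega : 2 ≤ 2 * δ)] at hrow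
  linarith

theorem sum_comp_codeg_self_eq_two_mul (δ : ℕ) {F : ℕ → ℤ} :
    ∑ v ∈ Ioc 0 (2 * δ), F (codeg δ v v) = 2 * ∑ v ∈ Ioc 0 δ, F (codeg δ v v) := by
  rw [sum_Ioc_eq_two_nsmul_of_reflect _ δ fun v hv => by rw [codeg_reflect hv hv], two_nsmul,
    two_mul]

theorem three_mul_card_cycleTriples (δ : ℕ) :
    3 * (#(cycleTriples δ) : ℤ) = δ * (δ + 1) * (2 * δ - 2) := by
  have hdouble := sum_card_filter_mem_eq_sum_card (cycleTriples δ) verts fun _ => verts_subset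
  rw [sum_const_nat fun _ => card_verts] at hdouble
  simp only [← codeg_self] at hdouble
  have hcast : 2 * ∑ v ∈ Ioc 0 δ, (codeg δ v v : ℤ) = #(cycleTriples δ) * 3 := by
    rw [← sum_comp_codeg_self_eq_two_mul (F := fun k => (k : ℤ))]
    exact_mod_cast hdouble
  have hhalf : ∑ v ∈ Ioc 0 δ, 2 * (codeg δ v v : ℤ) =
      ∑ v ∈ Ioc 0 δ, (δ * (δ + 1) + 2 * v * (δ - 2) : ℤ) :=
    sum_congr rfl fun v hv => by rw [mem_Ioc] at hv; exact two_mul_codeg_self hv.1 hv.2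
  have hclosed := sum_Ioc_eq_sub_of_succ (fun v => (δ * (δ + 1) + 2 * v * (δ - 2) : ℤ))
    (fun x => δ * (δ + 1) * x + (δ - 2) * x * (x + 1)) (fun x => by push_cast; ring)
    (Nat.zero_le δ)
  rw [← mul_sum] at hhalf
  linear_combination hcast.symm + hhalf + hclosed

theorem six_mul_sum_sq_codeg_self (δ : ℕ) :
    6 * ∑ v ∈ Ioc 0 (2 * δ), (codeg δ v v : ℤ) ^ 2 =
      13 * δ ^ 5 - 4 * δ ^ 4 - 21 * δ ^ 3 + 4 * δ ^ 2 + 8 * δ := by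
  have hhalf : ∑ v ∈ Ioc 0 δ, 12 * (codeg δ v v : ℤ) ^ 2 =
      ∑ v ∈ Ioc 0 δ, 3 * (δ * (δ + 1) + 2 * v * (δ - 2) : ℤ) ^ 2 :=
    sum_congr rfl fun v hv => by
      rw [mem_Ioc] at hv; rw [← two_mul_codeg_self hv.1 hv.2]; ring
  have hclosed := sum_Ioc_eq_sub_of_succ
    (fun v => 3 * (δ * (δ + 1) + 2 * v * (δ - 2) : ℤ) ^ 2)
    (fun x => 3 * δ ^ 2 * (δ + 1) ^ 2 * x + 6 * δ * (δ + 1) * (δ - 2) * x * (x + 1)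
      + 2 * (δ - 2) ^ 2 * x * (x + 1) * (2 * x + 1))
    (fun x => by push_cast; ring) (Nat.zero_le δ)
  rw [← mul_sum] at hhalf
  rw [sum_comp_codeg_self_eq_two_mul (F := fun k => (k : ℤ) ^ 2)]
  linear_combination hhalf + hclosed

theorem six_mul_sum_sum_sq_codeg (δ : ℕ) :
    6 * ∑ u ∈ Ioc 0 (2 * δ), ∑ v ∈ Ioc 0 (2 * δ), (codeg δ u v : ℤ) ^ 2 =
      13 * δ ^ 5 + 29 * δ ^ 4 - 39 * δ ^ 3 - 29 * δ ^ 2 + 26 * δ := by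
  have hsymm : ∀ u ∈ Ioc 0 (2 * δ), ∑ v ∈ Ioc 0 (2 * δ), (codeg δ (2 * δ + 1 - u) v : ℤ) ^ 2 =
      ∑ v ∈ Ioc 0 (2 * δ), (codeg δ u v : ℤ) ^ 2 := by
    intro u hu
    have hreflect := sum_Ioc_reflect (fun w => (codeg δ (2 * δ + 1 - u) w : ℤ) ^ 2)
      (Nat.zero_le (2 * δ)) le_rfl
    rw [Nat.sub_self, Nat.sub_zero] at hreflect
    rw [← hreflect]
    exact sum_congr rfl fun v hv => by rw [codeg_reflect hu hv]
  have hrow : ∀ u ∈ Ioc 0 δ, 12 * ∑ v ∈ Ioc 0 (2 * δ), (codeg δ u v : ℤ) ^ 2 =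
      12 * (u - 1) * u ^ 2 + 3 * (δ * (δ + 1) + 2 * u * (δ - 2)) ^ 2
        + 4 * (δ * (δ + 1) * (2 * δ + 1) - u * (u + 1) * (2 * u + 1))
        + 12 * u * (2 * δ - 2) ^ 2 := by
    intro u hu
    rw [mem_Ioc] at hu
    rw [sum_comp_codeg (fun k => (k : ℤ) ^ 2) hu.1 hu.2, ← six_mul_sum_Ioc_sq hu.2,
      ← two_mul_codeg_self hu.1 hu.2]
    push_cast [Nat.cast_sub (by omega : 2 ≤ 2 * δ)]
    ring
  rw [sum_Ioc_eq_two_nsmul_of_reflect _ δ hsymm, two_nsmul, ← two_mul, ← mul_assoc,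
    show (6 : ℤ) * 2 = 12 by norm_num, mul_sum, sum_congr rfl hrow,
    sum_Ioc_eq_sub_of_succ _ (fun x => (3 * x ^ 2 * (x + 1) ^ 2 - 2 * x * (x + 1) * (2 * x + 1)
      + 3 * δ ^ 2 * (δ + 1) ^ 2 * x + 6 * δ * (δ + 1) * (δ - 2) * x * (x + 1)
      + 2 * (δ - 2) ^ 2 * x * (x + 1) * (2 * x + 1)
      + 4 * δ * (δ + 1) * (2 * δ + 1) * x - 2 * x * (x + 1) ^ 2 * (x + 2)
      + 6 * (2 * δ - 2) ^ 2 * x * (x + 1) : ℤ))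
    (fun x => by push_cast; ring) (Nat.zero_le δ)]
  push_cast
  ring

theorem thirty_six_mul_card_disjoint_cycleTriples (δ : ℕ) :
    36 * (#{p ∈ cycleTriples δ ×ˢ cycleTriples δ | Disjoint (verts p.1) (verts p.2)} : ℤ) =
      ((δ : ℤ) - 2) * ((δ : ℤ) - 1) * δ * ((δ : ℤ) + 1) * (2 * δ - 5) * (8 * δ - 3) := by
  have h := two_mul_card_disjoint_pairs (cycleTriples δ) verts (fun _ => verts_subset)
    (fun _ => card_verts) (verts_injOn δ)
  simp only [← codeg_self, ← codeg.eq_1] at h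
  have hN := three_mul_card_cycleTriples δ
  linear_combination 18 * h - 9 * six_mul_sum_sq_codeg_self δ + 3 * six_mul_sum_sum_sq_codeg δ
    + (4 * (3 * (#(cycleTriples δ) : ℤ) + δ * (δ + 1) * (2 * δ - 2)) - 12) * hN

theorem rltAdj_iff {δ : ℕ} (x y : ZMod (2 * δ + 1)) :
    rltAdj (2 * δ + 1) x y ↔ (x.val < y.val ∧ y.val ≤ x.val + δ) ∨ y.val + δ < x.val := by
  have hx := ZMod.val_lt x
  have hy := ZMod.val_lt y
  rw [rltAdj, ZMod.val_sub_eq_ite, mem_Icc, show (2 * δ + 1 - 1) / 2 = δ by omega]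
  split_ifs <;> omega

def valTriple {n : ℕ} (v : Fin 4 → ZMod n) : ℕ × ℕ × ℕ := ((v 1).val, (v 2).val, (v 3).val)

def ofTriple (n : ℕ) (t : ℕ × ℕ × ℕ) : Fin 4 → ZMod n := ![0, t.1, t.2.1, t.2.2]

theorem valTriple_ofTriple {δ : ℕ} {t : ℕ × ℕ × ℕ} (ht : t ∈ cycleTriples δ) :
    valTriple (ofTriple (2 * δ + 1) t) = t := by
  obtain ⟨a, b, c⟩ := t
  rw [mem_cycleTriples] at ht
  simp only [valTriple, ofTriple, Matrix.cons_val, Prod.mk.injEq]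
  refine ⟨ZMod.val_cast_of_lt ?_, ZMod.val_cast_of_lt ?_, ZMod.val_cast_of_lt ?_⟩ <;> omega

theorem ofTriple_valTriple {n : ℕ} [NeZero n] {v : Fin 4 → ZMod n} (h0 : v 0 = 0) :
    ofTriple n (valTriple v) = v := by
  ext i
  fin_cases i <;> simp [ofTriple, valTriple, h0]

theorem isBasedCycleAtZero_iff {δ : ℕ} {v : Fin 4 → ZMod (2 * δ + 1)} :
    IsBasedCycleAtZero (2 * δ + 1) 4 v ↔ v 0 = 0 ∧ valTriple v ∈ cycleTriples δ := by
  have h1 := ZMod.val_lt (v 1)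
  have h2 := ZMod.val_lt (v 2)
  have h3 := ZMod.val_lt (v 3)
  constructor
  · rintro ⟨h0, -, harc⟩
    have a0 := (rltAdj_iff _ _).mp (harc 0)
    have a1 := (rltAdj_iff _ _).mp (harc 1)
    have a2 := (rltAdj_iff _ _).mp (harc 2)
    have a3 := (rltAdj_iff _ _).mp (harc 3)
    simp only [Fin.isValue, Fin.reduceAdd, h0, ZMod.val_zero] at a0 a1 a2 a3
    refine ⟨h0, ?_⟩
    rw [valTriple, mem_cycleTriples]
    omega
  · rintro ⟨h0, hmem⟩
    rw [valTriple, mem_cycleTriples] at hmem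
    refine ⟨h0, fun i j hij => ?_, fun k => ?_⟩
    · have := congrArg ZMod.val hij
      fin_cases i <;> fin_cases j <;>
        simp only [Fin.reduceFinMk, Fin.isValue, h0, ZMod.val_zero] at this ⊢ <;> omega
    · rw [rltAdj_iff]
      fin_cases k <;> simp only [Fin.reduceFinMk, Fin.isValue, Fin.reduceAdd, h0, ZMod.val_zero] <;>
        omega

theorem mem_range_iff {n : ℕ} [NeZero n] {v : Fin 4 → ZMod n} (h0 : v 0 = 0) (x : ZMod n) :
    x ∈ Set.range v ↔ x = 0 ∨ x.val ∈ verts (valTriple v) := by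
  simp only [valTriple, mem_verts]
  constructor
  · rintro ⟨i, rfl⟩
    fin_cases i <;> simp [h0]
  · rintro (rfl | h | h | h)
    · exact ⟨0, h0⟩
    · exact ⟨1, (ZMod.val_injective n h).symm⟩
    · exact ⟨2, (ZMod.val_injective n h).symm⟩
    · exact ⟨3, (ZMod.val_injective n h).symm⟩

theorem range_inter_range_eq_singleton_zero_iff {δ : ℕ} {v w : Fin 4 → ZMod (2 * δ + 1)}
    (hv : v 0 = 0) (hw : w 0 = 0) (hvC : valTriple v ∈ cycleTriples δ) :
    Set.range v ∩ Set.range w = {0} ↔ Disjoint (verts (valTriple v)) (verts (valTriple w)) := by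
  rw [Set.eq_singleton_iff_unique_mem, Finset.disjoint_left]
  simp only [Set.mem_inter_iff, mem_range_iff hv, mem_range_iff hw]
  constructor
  · rintro ⟨-, huniq⟩ k hkv hkw
    have hk := mem_Ioc.mp (verts_subset hvC hkv)
    have hval : (k : ZMod (2 * δ + 1)).val = k := ZMod.val_cast_of_lt (by omega)
    have hzero := huniq k ⟨Or.inr (by rwa [hval]), Or.inr (by rwa [hval])⟩
    rw [hzero, ZMod.val_zero] at hval
    omega
  · intro hdisj
    refine ⟨by simp, fun x ⟨hxv, hxw⟩ => ?_⟩
    rcases hxv with hx | hx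
    · exact hx
    · exact hxw.resolve_right (hdisj hx)

theorem natCard_disjoint_basedCycles_eq (δ : ℕ) :
    Nat.card {p : (Fin 4 → ZMod (2 * δ + 1)) × (Fin 4 → ZMod (2 * δ + 1)) //
        IsBasedCycleAtZero (2 * δ + 1) 4 p.1 ∧ IsBasedCycleAtZero (2 * δ + 1) 4 p.2 ∧
        Set.range p.1 ∩ Set.range p.2 = {0}} =
      #{q ∈ cycleTriples δ ×ˢ cycleTriples δ | Disjoint (verts q.1) (verts q.2)} := by
  classical
  rw [Nat.card_eq_fintype_card, Fintype.card_subtype]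
  apply card_nbij' (fun p => (valTriple p.1, valTriple p.2))
    (fun q => (ofTriple _ q.1, ofTriple _ q.2))
  · rintro ⟨v, w⟩ hp
    simp only [mem_coe, mem_filter, mem_univ, true_and, isBasedCycleAtZero_iff] at hp
    obtain ⟨⟨hv, hvC⟩, ⟨hw, hwC⟩, hrange⟩ := hp
    simp only [mem_coe, mem_filter, mem_product]
    exact ⟨⟨hvC, hwC⟩, (range_inter_range_eq_singleton_zero_iff hv hw hvC).mp hrange⟩
  · rintro ⟨s, t⟩ hq
    simp only [mem_coe, mem_filter, mem_product] at hq
    obtain ⟨⟨hs, ht⟩, hdisj⟩ := hq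
    simp only [mem_coe, mem_filter, mem_univ, true_and, isBasedCycleAtZero_iff,
      valTriple_ofTriple hs, valTriple_ofTriple ht]
    refine ⟨⟨rfl, hs⟩, ⟨rfl, ht⟩, (range_inter_range_eq_singleton_zero_iff rfl rfl ?_).mpr ?_⟩
    · rwa [valTriple_ofTriple hs]
    · rwa [valTriple_ofTriple hs, valTriple_ofTriple ht]
  · rintro ⟨v, w⟩ hp
    simp only [mem_coe, mem_filter, mem_univ, true_and, isBasedCycleAtZero_iff] at hp
    exact Prod.ext (ofTriple_valTriple hp.1.1) (ofTriple_valTriple hp.2.1.1)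
  · rintro ⟨s, t⟩ hq
    simp only [mem_coe, mem_filter, mem_product] at hq
    exact Prod.ext (valTriple_ofTriple hq.1.1) (valTriple_ofTriple hq.1.2)

end RLT

theorem pairs_of_disjoint_four_cycles_of_RLT_general
    (n : ℕ) (hodd : Odd n) (δ : ℕ) (hδ : δ = (n - 1) / 2) :
    36 * (Nat.card {p : (Fin 4 → ZMod n) × (Fin 4 → ZMod n) //
        IsBasedCycleAtZero n 4 p.1 ∧ IsBasedCycleAtZero n 4 p.2 ∧
        Set.range p.1 ∩ Set.range p.2 = {0}} : ℤ)
      = ((δ : ℤ) - 2) * ((δ : ℤ) - 1) * (δ : ℤ) * ((δ : ℤ) + 1) *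
          (2 * (δ : ℤ) - 5) * (8 * (δ : ℤ) - 3) := by
  obtain ⟨m, rfl⟩ := hodd
  obtain rfl : δ = m := by omega
  rw [RLT.natCard_disjoint_basedCycles_eq]
  exact RLT.thirty_six_mul_card_disjoint_cycleTriples δ

theorem pairs_of_disjoint_four_cycles_of_RLT
    (n : ℕ) (hodd : Odd n) (hn : 1 ≤ n) (δ : ℕ) (hδ : δ = (n - 1) / 2) :
    36 * (Nat.card {p : (Fin 4 → ZMod n) × (Fin 4 → ZMod n) //
        IsBasedCycleAtZero n 4 p.1 ∧ IsBasedCycleAtZero n 4 p.2 ∧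
        Set.range p.1 ∩ Set.range p.2 = {0}} : ℤ)
      = ((δ : ℤ) - 2) * ((δ : ℤ) - 1) * (δ : ℤ) * ((δ : ℤ) + 1) *
          (2 * (δ : ℤ) - 5) * (8 * (δ : ℤ) - 3) :=
  pairs_of_disjoint_four_cycles_of_RLT_general n hodd δ hδ
end

section
/- Let T be a doubly-regular tournament of order 4t+3 with adjacency matrix A. Then for every vertex i: (A³)_{ii} = (2t+1)(t+1), (A⁴)_{ii} = 2t(t+1)(2t+1), and (A⁵)_{ii} = t(t+1)(2t+1)(4t+1). -/
/-- A tournament on the vertex type `V`. -/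
structure Tournament (V : Type*) where
  r : V → V → Prop
  dec : DecidableRel r
  irrefl : ∀ i, ¬ r i i
  total : ∀ i j, i ≠ j → (r i j ↔ ¬ r j i)

attribute [instance] Tournament.dec

/-- A doubly-regular tournament of order `4t+3`: every pair of distinct vertices
jointly dominates exactly `t` vertices. -/
def Tournament.IsDoublyRegular {V : Type*} (T : Tournament V) (t : ℕ) : Prop :=
  ∀ i j : V, i ≠ j → Nat.card {k : V // T.r i k ∧ T.r j k} = t

/-- The 0/1 adjacency matrix of a tournament. -/
def Tournament.adj {V : Type*} (T : Tournament V) : Matrix V V ℕ :=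
  Matrix.of fun i j => if T.r i j then 1 else 0

open Finset

namespace DRTaux

variable {t : ℕ} {T : Tournament (Fin (4 * t + 3))}

lemma not_both {i j : Fin (4 * t + 3)} (h1 : T.r i j) (h2 : T.r j i) : False := by
  rcases eq_or_ne i j with rfl | h
  · exact T.irrefl i h1
  · exact ((T.total i j h).1 h1) h2

lemma r_of_not {i j : Fin (4 * t + 3)} (h : i ≠ j) (h1 : ¬ T.r i j) : T.r j i := by
  by_contra h2
  exact h1 ((T.total i j h).2 h2)

lemma joint_card (hDR : T.IsDoublyRegular t) {i j : Fin (4 * t + 3)} (hij : i ≠ j) :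
    (univ.filter fun k => T.r i k ∧ T.r j k).card = t := by
  have h := hDR i j hij
  rwa [Nat.card_eq_fintype_card, Fintype.card_subtype] at h

lemma out_card (hDR : T.IsDoublyRegular t) (i : Fin (4 * t + 3)) :
    (univ.filter fun k => T.r i k).card = 2 * t + 1 := by
  set S := univ.filter fun k => T.r i k with hS
  have hmem : ∀ j, j ∈ S ↔ T.r i j := by intro j; simp [hS]
  -- S is nonempty
  have hd : S.card ≠ 0 := by
    intro h0
    have hempty : ∀ k, ¬ T.r i k := by
      intro k hk
      have : k ∈ S := (hmem k).2 hk
      simp [Finset.card_eq_zero.1 h0] at this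
    -- pick two vertices distinct from i
    have hcompl : (({i} : Finset (Fin (4 * t + 3)))ᶜ).Nonempty := by
      rw [← Finset.card_pos, Finset.card_compl]
      simp
    obtain ⟨j, hj⟩ := hcompl
    have hji : j ≠ i := by simpa using hj
    have ht0 : t = 0 := by
      have := joint_card hDR hji.symm
      have hsub : (univ.filter fun k => T.r i k ∧ T.r j k) = ∅ := by
        apply Finset.filter_eq_empty_iff.2
        intro k _ hk
        exact hempty k hk.1
      rw [hsub] at this
      simpa using this.symm
    have hcompl2 : (({i, j} : Finset (Fin (4 * t + 3)))ᶜ).Nonempty := by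
      rw [← Finset.card_pos, Finset.card_compl]
      have : ({i, j} : Finset (Fin (4 * t + 3))).card ≤ 2 :=
        Finset.card_insert_le _ _ |>.trans (by simp)
      have hcard : Fintype.card (Fin (4 * t + 3)) = 4 * t + 3 := by simp
      omega
    obtain ⟨k, hk⟩ := hcompl2
    simp only [Finset.mem_compl, Finset.mem_insert, Finset.mem_singleton, not_or] at hk
    obtain ⟨hki, hkj⟩ := hk
    have hjk : j ≠ k := fun h => hkj h.symm
    have hji' : T.r j i := r_of_not hji.symm (hempty j)
    have hki' : T.r k i := r_of_not (Ne.symm hki) (hempty k)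
    have := joint_card hDR hjk
    have hmem2 : i ∈ univ.filter fun m => T.r j m ∧ T.r k m := by
      simp [hji', hki']
    have : 1 ≤ t := by
      rw [← this]
      exact Finset.card_pos.2 ⟨i, hmem2⟩
    omega
  -- double counting within S
  have hsum : ∑ j ∈ S, (S.filter fun k => T.r j k).card = S.card * t := by
    rw [Finset.sum_congr rfl (fun j hj => ?_), Finset.sum_const, smul_eq_mul]
    have hij : i ≠ j := fun h => T.irrefl i (h ▸ (hmem j).1 hj)
    rw [hS, Finset.filter_filter]
    exact joint_card hDR hij
  have hkey : 2 * (S.card * t) + S.card = S.card * S.card := by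
    have e1 : ∀ j ∈ S, ∀ k ∈ S,
        ((if T.r j k then 1 else 0) + (if T.r k j then 1 else 0)) + (if j = k then 1 else 0)
          = (1 : ℕ) := by
      intro j _ k _
      rcases eq_or_ne j k with rfl | h
      · simp [T.irrefl j]
      · by_cases hr : T.r j k
        · have : ¬ T.r k j := fun h2 => not_both hr h2
          simp [hr, this, h]
        · have : T.r k j := r_of_not h hr
          simp [hr, this, h]
    have e2 : ∑ j ∈ S, ∑ k ∈ S,
        (((if T.r j k then 1 else 0) + (if T.r k j then 1 else 0)) + (if j = k then 1 else 0))
        = S.card * S.card := by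
      rw [Finset.sum_congr rfl (fun j hj => Finset.sum_congr rfl (fun k hk => e1 j hj k hk))]
      simp [mul_comm]
    simp only [Finset.sum_add_distrib] at e2
    have e3 : ∑ j ∈ S, ∑ k ∈ S, (if T.r k j then (1:ℕ) else 0)
        = ∑ j ∈ S, ∑ k ∈ S, (if T.r j k then (1:ℕ) else 0) := Finset.sum_comm
    have e4 : ∑ j ∈ S, ∑ k ∈ S, (if T.r j k then (1:ℕ) else 0) = S.card * t := by
      rw [← hsum]
      exact Finset.sum_congr rfl fun j _ => (Finset.card_filter _ _).symm
    have e5 : ∑ j ∈ S, ∑ k ∈ S, (if j = k then (1:ℕ) else 0) = S.card := by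
      rw [Finset.sum_congr rfl (fun j hj => Finset.sum_ite_eq S j (fun _ => (1:ℕ)))]
      rw [Finset.sum_congr rfl (fun j hj => if_pos hj)]
      simp
    rw [e3, e4, e5] at e2
    omega
  have : S.card * (2 * t + 1) = S.card * S.card := by ring_nf; ring_nf at hkey; omega
  have := Nat.eq_of_mul_eq_mul_left (Nat.pos_of_ne_zero hd) this
  omega

lemma in_card (hDR : T.IsDoublyRegular t) (i : Fin (4 * t + 3)) :
    (univ.filter fun k => T.r k i).card = 2 * t + 1 := by
  have e1 : ∀ k : Fin (4 * t + 3),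
      ((if T.r i k then 1 else 0) + (if T.r k i then 1 else 0)) + (if k = i then 1 else 0)
        = (1 : ℕ) := by
    intro k
    rcases eq_or_ne k i with rfl | h
    · simp [T.irrefl k]
    · by_cases hr : T.r i k
      · have : ¬ T.r k i := fun h2 => not_both hr h2
        simp [hr, this, h]
      · have : T.r k i := r_of_not (Ne.symm h) hr
        simp [hr, this, h]
  have e2 : ∑ k : Fin (4 * t + 3),
      (((if T.r i k then 1 else 0) + (if T.r k i then 1 else 0)) + (if k = i then 1 else 0))
        = 4 * t + 3 := by
    rw [Finset.sum_congr rfl (fun k _ => e1 k)]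
    simp
  simp only [Finset.sum_add_distrib] at e2
  rw [Finset.sum_ite_eq' univ i (fun _ => (1:ℕ))] at e2
  rw [← Finset.card_filter, ← Finset.card_filter, out_card hDR i] at e2
  simp only [Finset.mem_univ, if_pos] at e2
  omega

lemma outin_card (hDR : T.IsDoublyRegular t) {i j : Fin (4 * t + 3)} (hij : i ≠ j) :
    (univ.filter fun k => T.r i k ∧ T.r k j).card = if T.r i j then t else t + 1 := by
  set S := univ.filter fun k => T.r i k with hS
  have e1 : ∀ k ∈ S,
      ((if T.r j k then 1 else 0) + (if T.r k j then 1 else 0)) + (if k = j then 1 else 0)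
        = (1 : ℕ) := by
    intro k _
    rcases eq_or_ne k j with rfl | h
    · simp [T.irrefl k]
    · by_cases hr : T.r j k
      · have : ¬ T.r k j := fun h2 => not_both hr h2
        simp [hr, this, h]
      · have : T.r k j := r_of_not (Ne.symm h) hr
        simp [hr, this, h]
  have e2 : ∑ k ∈ S,
      (((if T.r j k then 1 else 0) + (if T.r k j then 1 else 0)) + (if k = j then 1 else 0))
        = 2 * t + 1 := by
    rw [Finset.sum_congr rfl e1]
    simp [out_card hDR i, hS]
  simp only [Finset.sum_add_distrib] at e2
  rw [Finset.sum_ite_eq' S j (fun _ => (1:ℕ))] at e2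
  rw [← Finset.card_filter, ← Finset.card_filter] at e2
  rw [hS, Finset.filter_filter, Finset.filter_filter] at e2
  have hj1 : (univ.filter fun k => T.r i k ∧ T.r j k).card = t := joint_card hDR hij
  rw [hj1] at e2
  have hjmem : (j ∈ univ.filter fun k => T.r i k) ↔ T.r i j := by simp
  by_cases hr : T.r i j
  · rw [if_pos hr]
    rw [if_pos (by simp [hS, hr])] at e2
    omega
  · rw [if_neg hr]
    rw [if_neg (by simp [hS, hr])] at e2
    omega

lemma inin_card (hDR : T.IsDoublyRegular t) {i j : Fin (4 * t + 3)} (hij : i ≠ j) :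
    (univ.filter fun k => T.r k i ∧ T.r k j).card = t := by
  set S := univ.filter fun k => T.r k j with hS
  have e1 : ∀ k ∈ S,
      ((if T.r i k then 1 else 0) + (if T.r k i then 1 else 0)) + (if k = i then 1 else 0)
        = (1 : ℕ) := by
    intro k _
    rcases eq_or_ne k i with rfl | h
    · simp [T.irrefl k]
    · by_cases hr : T.r i k
      · have : ¬ T.r k i := fun h2 => not_both hr h2
        simp [hr, this, h]
      · have : T.r k i := r_of_not (Ne.symm h) hr
        simp [hr, this, h]
  have e2 : ∑ k ∈ S,
      (((if T.r i k then 1 else 0) + (if T.r k i then 1 else 0)) + (if k = i then 1 else 0))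
        = 2 * t + 1 := by
    rw [Finset.sum_congr rfl e1]
    simp [in_card hDR j, hS]
  simp only [Finset.sum_add_distrib] at e2
  rw [Finset.sum_ite_eq' S i (fun _ => (1:ℕ))] at e2
  rw [← Finset.card_filter, ← Finset.card_filter] at e2
  rw [hS, Finset.filter_filter, Finset.filter_filter] at e2
  have ho : (univ.filter fun k => T.r k j ∧ T.r i k).card
      = if T.r i j then t else t + 1 := by
    rw [show (univ.filter fun k => T.r k j ∧ T.r i k)
        = univ.filter fun k => T.r i k ∧ T.r k j from
      Finset.filter_congr fun k _ => and_comm]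
    exact outin_card hDR hij
  rw [ho] at e2
  have hy : (univ.filter fun k => T.r k j ∧ T.r k i).card
      = (univ.filter fun k => T.r k i ∧ T.r k j).card := by
    rw [show (univ.filter fun k => T.r k j ∧ T.r k i)
        = univ.filter fun k => T.r k i ∧ T.r k j from
      Finset.filter_congr fun k _ => and_comm]
  rw [hy] at e2
  by_cases hr : T.r i j
  · rw [if_pos hr, if_pos (by simp [hS, hr])] at e2
    omega
  · rw [if_neg hr, if_neg (by simp [hS, hr])] at e2
    omega

lemma mul_adj_apply (M : Matrix (Fin (4 * t + 3)) (Fin (4 * t + 3)) ℕ)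
    (i j : Fin (4 * t + 3)) :
    (M * T.adj) i j = ∑ k ∈ univ.filter (fun k => T.r k j), M i k := by
  rw [Matrix.mul_apply, Finset.sum_filter]
  refine Finset.sum_congr rfl fun k _ => ?_
  by_cases h : T.r k j <;> simp [Tournament.adj, h]

lemma sq_apply (hDR : T.IsDoublyRegular t) (i j : Fin (4 * t + 3)) :
    (T.adj ^ 2) i j = if i = j then 0 else if T.r i j then t else t + 1 := by
  have h1 : (T.adj ^ 2) i j = ∑ k ∈ univ.filter (fun k => T.r k j), T.adj i k := by
    rw [pow_two]; exact mul_adj_apply T.adj i j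
  have h2 : ∑ k ∈ univ.filter (fun k => T.r k j), T.adj i k
      = (univ.filter fun k => T.r i k ∧ T.r k j).card := by
    rw [show (univ.filter fun k => T.r i k ∧ T.r k j)
        = univ.filter fun k => T.r k j ∧ T.r i k from
      Finset.filter_congr fun k _ => and_comm]
    rw [← Finset.filter_filter, Finset.card_filter]
    exact Finset.sum_congr rfl fun k _ => rfl
  rw [h1, h2]
  rcases eq_or_ne i j with rfl | h
  · rw [if_pos rfl]
    rw [Finset.card_eq_zero.2]
    apply Finset.filter_eq_empty_iff.2
    intro k _
    exact fun hk => not_both hk.1 hk.2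
  · rw [if_neg h]
    exact outin_card hDR h

lemma cube_off (hDR : T.IsDoublyRegular t) {i j : Fin (4 * t + 3)} (hij : i ≠ j) :
    (T.adj ^ 3) i j = if T.r i j then t * (2 * t + 1) else t * (2 * t + 2) := by
  have h1 : (T.adj ^ 3) i j = ∑ k ∈ univ.filter (fun k => T.r k j), (T.adj ^ 2) i k := by
    rw [pow_succ]; exact mul_adj_apply (T.adj ^ 2) i j
  have hpt : ∀ k, (T.adj ^ 2) i k
      = t * (if T.r i k then 1 else 0) + (t + 1) * (if T.r k i then 1 else 0) := by
    intro k
    rw [sq_apply hDR]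
    rcases eq_or_ne i k with rfl | h
    · simp [T.irrefl i]
    · by_cases hr : T.r i k
      · have : ¬ T.r k i := fun h2 => not_both hr h2
        simp [hr, this, h]
      · have : T.r k i := r_of_not h hr
        simp [hr, this, h]
  rw [h1, Finset.sum_congr rfl (fun k _ => hpt k), Finset.sum_add_distrib,
    ← Finset.mul_sum, ← Finset.mul_sum]
  have ha : ∑ k ∈ univ.filter (fun k => T.r k j), (if T.r i k then (1:ℕ) else 0)
      = if T.r i j then t else t + 1 := by
    rw [← Finset.card_filter, Finset.filter_filter]
    rw [show (univ.filter fun k => T.r k j ∧ T.r i k)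
        = univ.filter fun k => T.r i k ∧ T.r k j from
      Finset.filter_congr fun k _ => and_comm]
    exact outin_card hDR hij
  have hb : ∑ k ∈ univ.filter (fun k => T.r k j), (if T.r k i then (1:ℕ) else 0)
      = t := by
    rw [← Finset.card_filter, Finset.filter_filter]
    rw [show (univ.filter fun k => T.r k j ∧ T.r k i)
        = univ.filter fun k => T.r k i ∧ T.r k j from
      Finset.filter_congr fun k _ => and_comm]
    exact inin_card hDR hij
  rw [ha, hb]
  by_cases hr : T.r i j
  · rw [if_pos hr, if_pos hr]; ring
  · rw [if_neg hr, if_neg hr]; ring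

theorem main (hDR : T.IsDoublyRegular t) (i : Fin (4 * t + 3)) :
    (T.adj ^ 3) i i = (2 * t + 1) * (t + 1) ∧
    (T.adj ^ 4) i i = 2 * t * (t + 1) * (2 * t + 1) ∧
    (T.adj ^ 5) i i = t * (t + 1) * (2 * t + 1) * (4 * t + 1) := by
  have hval2 : ∀ k, T.r k i → (T.adj ^ 2) i k = t + 1 := by
    intro k hk
    have hik : i ≠ k := fun h => T.irrefl k (h ▸ hk)
    have hn : ¬ T.r i k := fun h2 => not_both h2 hk
    rw [sq_apply hDR, if_neg hik, if_neg hn]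
  have hval3 : ∀ k, T.r k i → (T.adj ^ 3) i k = t * (2 * t + 2) := by
    intro k hk
    have hik : i ≠ k := fun h => T.irrefl k (h ▸ hk)
    have hn : ¬ T.r i k := fun h2 => not_both h2 hk
    rw [cube_off hDR hik, if_neg hn]
  refine ⟨?_, ?_, ?_⟩
  · have h1 : (T.adj ^ 3) i i = ∑ k ∈ univ.filter (fun k => T.r k i), (T.adj ^ 2) i k := by
      rw [pow_succ]; exact mul_adj_apply (T.adj ^ 2) i i
    rw [h1, Finset.sum_congr rfl (fun k hk => hval2 k (by simpa using hk)),
      Finset.sum_const, in_card hDR i, smul_eq_mul]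
  · have h1 : (T.adj ^ 4) i i = ∑ k ∈ univ.filter (fun k => T.r k i), (T.adj ^ 3) i k := by
      rw [pow_succ]; exact mul_adj_apply (T.adj ^ 3) i i
    rw [h1, Finset.sum_congr rfl (fun k hk => hval3 k (by simpa using hk)),
      Finset.sum_const, in_card hDR i, smul_eq_mul]
    ring
  · have h5 : (T.adj ^ 5) i i = ∑ k, (T.adj ^ 3) i k * (T.adj ^ 2) k i := by
      rw [show (5 : ℕ) = 3 + 2 from rfl, pow_add, Matrix.mul_apply]
    have hpt : ∀ k, (T.adj ^ 3) i k * (T.adj ^ 2) k i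
        = (t * (2 * t + 1) * (t + 1)) * (if T.r i k then 1 else 0)
          + (t * (2 * t + 2) * t) * (if T.r k i then 1 else 0) := by
      intro k
      rcases eq_or_ne i k with rfl | h
      · rw [sq_apply hDR i i, if_pos rfl]
        simp [T.irrefl i]
      · by_cases hr : T.r i k
        · have hn : ¬ T.r k i := fun h2 => not_both hr h2
          rw [cube_off hDR h, if_pos hr, sq_apply hDR k i,
            if_neg (Ne.symm h), if_neg hn, if_pos hr, if_neg hn]
          ring
        · have hn : T.r k i := r_of_not h hr
          rw [cube_off hDR h, if_neg hr, sq_apply hDR k i,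
            if_neg (Ne.symm h), if_pos hn, if_neg hr, if_pos hn]
          ring
    rw [h5, Finset.sum_congr rfl (fun k _ => hpt k), Finset.sum_add_distrib,
      ← Finset.mul_sum, ← Finset.mul_sum, ← Finset.card_filter, ← Finset.card_filter,
      out_card hDR i, in_card hDR i]
    ring

end DRTaux

theorem adj_diagonal_entries_of_doubly_regular
    (t : ℕ) (T : Tournament (Fin (4 * t + 3)))
    (hDR : T.IsDoublyRegular t)
    (i : Fin (4 * t + 3)) :
    (T.adj ^ 3) i i = (2 * t + 1) * (t + 1) ∧
    (T.adj ^ 4) i i = 2 * t * (t + 1) * (2 * t + 1) ∧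
    (T.adj ^ 5) i i = t * (t + 1) * (2 * t + 1) * (4 * t + 1) := by
  exact DRTaux.main hDR i
end

section
/- Let T be a doubly-regular tournament of order 4t+3 with adjacency matrix A, and let (j,i) be an arc of T (i.e., j→i). Then (A⁴)_{ij} = t(t+1)(4t+1) and (A⁵)_{ij} = (t+1)(2t+1)(4t²+t+1). -/
open Finset Matrix


section
variable {t : ℕ} (T : Tournament (Fin (4 * t + 3)))

lemma common_card (hDR : T.IsDoublyRegular t) {i j : Fin (4*t+3)} (h : i ≠ j) :
    (Finset.univ.filter fun k => T.r i k ∧ T.r j k).card = t := by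
  have := hDR i j h
  rwa [Nat.card_eq_fintype_card, Fintype.card_subtype] at this

lemma pt_pair (j k : Fin (4*t+3)) :
    (if T.r j k then 1 else 0) + (if T.r k j then 1 else 0) = if j = k then 0 else (1:ℕ) := by
  by_cases h : j = k
  · subst h; simp [T.irrefl j]
  · have ht := T.total j k h
    by_cases h2 : T.r j k
    · simp [h, h2, ht.mp h2]
    · have : T.r k j := by by_contra hc; exact h2 (ht.mpr hc)
      simp [h, h2, this]

lemma pair_count (s : Finset (Fin (4*t+3))) :
    2 * ∑ j ∈ s, ∑ k ∈ s, (if T.r j k then 1 else 0) = s.card * (s.card - 1) := by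
  have hswap : ∑ j ∈ s, ∑ k ∈ s, (if T.r j k then 1 else 0)
      = ∑ j ∈ s, ∑ k ∈ s, (if T.r k j then 1 else 0) := Finset.sum_comm
  have h2 : 2 * ∑ j ∈ s, ∑ k ∈ s, (if T.r j k then 1 else 0)
      = ∑ j ∈ s, ∑ k ∈ s, ((if T.r j k then 1 else 0) + (if T.r k j then 1 else 0)) := by
    rw [two_mul]; nth_rewrite 2 [hswap]
    rw [← Finset.sum_add_distrib]
    simp [Finset.sum_add_distrib]
  rw [h2]
  simp_rw [pt_pair]
  have hinner : ∀ j ∈ s, (∑ k ∈ s, if j = k then 0 else (1:ℕ)) = s.card - 1 := by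
    intro j hj
    rw [Finset.sum_ite, Finset.sum_const, Finset.sum_const, smul_eq_mul, mul_zero, zero_add,
      smul_eq_mul, mul_one]
    have : s.filter (fun k => ¬ j = k) = s.erase j := by
      ext k; simp [Finset.mem_erase, eq_comm, and_comm]
    rw [this, Finset.card_erase_of_mem hj]
  rw [Finset.sum_congr rfl hinner, Finset.sum_const, smul_eq_mul]
end

section deg
variable {t : ℕ} (T : Tournament (Fin (4 * t + 3)))

lemma outdeg_dichotomy (hDR : T.IsDoublyRegular t) (i : Fin (4*t+3)) :
    (Finset.univ.filter fun k => T.r i k).card = 0 ∨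
    (Finset.univ.filter fun k => T.r i k).card = 2*t+1 := by
  set N := Finset.univ.filter fun k => T.r i k with hN
  have hsum : ∑ j ∈ N, ∑ k ∈ N, (if T.r j k then 1 else 0) = N.card * t := by
    rw [Finset.sum_congr rfl (g := fun _ => t) ?_, Finset.sum_const, smul_eq_mul]
    intro j hj
    have hij : i ≠ j := by
      rintro rfl
      exact T.irrefl i (by simpa [hN] using hj)
    have : ∑ k ∈ N, (if T.r j k then 1 else 0) = (N.filter fun k => T.r j k).card := by
      rw [Finset.sum_ite, Finset.sum_const, Finset.sum_const, smul_eq_mul, mul_one,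
        smul_eq_mul, mul_zero, add_zero]
    rw [this]
    have hfe : N.filter (fun k => T.r j k) = Finset.univ.filter fun k => T.r i k ∧ T.r j k := by
      ext k; simp [hN, and_assoc]
    rw [hfe, common_card T hDR hij]
  have hp := pair_count T N
  rw [hsum] at hp
  rcases Nat.eq_zero_or_pos N.card with h0 | hpos
  · exact Or.inl h0
  · right
    have h2 : N.card * (2*t) = N.card * (N.card - 1) := by rw [← hp]; ring
    have : 2 * t = N.card - 1 := Nat.eq_of_mul_eq_mul_left hpos h2
    omega

lemma outdeg_eq (hDR : T.IsDoublyRegular t) (i : Fin (4*t+3)) :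
    (Finset.univ.filter fun k => T.r i k).card = 2*t+1 := by
  rcases outdeg_dichotomy T hDR i with h0 | h
  · exfalso
    have hglob := pair_count T (Finset.univ : Finset (Fin (4*t+3)))
    rw [Finset.card_univ, Fintype.card_fin] at hglob
    have hout : ∀ a : Fin (4*t+3), ∑ k ∈ Finset.univ, (if T.r a k then 1 else 0)
        = (Finset.univ.filter fun k => T.r a k).card := by
      intro a
      rw [Finset.sum_ite, Finset.sum_const, Finset.sum_const, smul_eq_mul, mul_one,
        smul_eq_mul, mul_zero, add_zero]
    rw [Finset.sum_congr rfl (fun a _ => hout a)] at hglob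
    -- sum over all vertices, bound it
    have hbound : ∑ a ∈ Finset.univ, (Finset.univ.filter fun k => T.r a k).card
        ≤ ∑ a ∈ Finset.univ.erase i, (2*t+1) := by
      rw [← Finset.add_sum_erase _ _ (Finset.mem_univ i), h0, zero_add]
      refine Finset.sum_le_sum ?_
      intro a _
      rcases outdeg_dichotomy T hDR a with h' | h' <;> omega
    rw [Finset.sum_const, smul_eq_mul, Finset.card_erase_of_mem (Finset.mem_univ i),
      Finset.card_univ, Fintype.card_fin] at hbound
    have e1 : 4*t+3-1 = 4*t+2 := rfl
    rw [e1] at hglob hbound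
    nlinarith [hglob, hbound]
  · exact h

lemma indeg_eq (hDR : T.IsDoublyRegular t) (i : Fin (4*t+3)) :
    (Finset.univ.filter fun j => T.r j i).card = 2*t+1 := by
  have hpart : (Finset.univ.filter fun j => T.r j i) =
      (Finset.univ.erase i).filter fun j => ¬ T.r i j := by
    ext j
    simp only [Finset.mem_filter, Finset.mem_erase, Finset.mem_univ, true_and, and_true]
    constructor
    · intro hj
      have hne : j ≠ i := by rintro rfl; exact T.irrefl _ hj
      exact ⟨hne, fun hc => (T.total i j (Ne.symm hne)).mp hc hj⟩
    · rintro ⟨hne, hc⟩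
      exact (T.total j i hne).mpr (fun hc' => hc hc')
  have hsplit := Finset.card_filter_add_card_filter_not
    (s := (Finset.univ : Finset (Fin (4*t+3))).erase i) (p := fun j => T.r i j)
  have hout' : ((Finset.univ : Finset (Fin (4*t+3))).erase i).filter (fun j => T.r i j)
      = Finset.univ.filter (fun j => T.r i j) := by
    ext j
    simp only [Finset.mem_filter, Finset.mem_erase, Finset.mem_univ, true_and, and_true]
    constructor
    · exact fun h => h.2
    · intro h; exact ⟨fun hc => T.irrefl i (hc ▸ h), h⟩
  rw [hout', outdeg_eq T hDR i, Finset.card_erase_of_mem (Finset.mem_univ i),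
    Finset.card_univ, Fintype.card_fin] at hsplit
  rw [hpart]
  omega
end deg

theorem adj_fourth_fifth_power_entries_of_doubly_regular
    (t : ℕ) (T : Tournament (Fin (4 * t + 3)))
    (hDR : T.IsDoublyRegular t)
    (i j : Fin (4 * t + 3)) (harc : T.r j i) :
    (T.adj ^ 4) i j = t * (t + 1) * (4 * t + 1) ∧
    (T.adj ^ 5) i j = (t + 1) * (2 * t + 1) * (4 * t ^ 2 + t + 1) := by
  classical
  set B : Matrix (Fin (4*t+3)) (Fin (4*t+3)) ℤ := T.adj.map (Nat.cast) with hB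
  set J : Matrix (Fin (4*t+3)) (Fin (4*t+3)) ℤ := Matrix.of fun _ _ => 1 with hJ
  set s : ℤ := (t : ℤ) with hs
  have hBapp : ∀ a b, B a b = if T.r a b then 1 else 0 := by
    intro a b
    simp [hB, Tournament.adj, Matrix.map_apply, apply_ite (Nat.cast : ℕ → ℤ)]
  have hij : i ≠ j := fun h => T.irrefl j (h ▸ harc)
  have hBij : B i j = 0 := by
    rw [hBapp]
    have : ¬ T.r i j := fun h => (T.total i j hij).mp h harc
    simp [this]
  -- row sums
  have hBJ : B * J = (2*s+1) • J := by
    ext a b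
    rw [Matrix.mul_apply, Matrix.smul_apply]
    simp only [hJ, Matrix.of_apply, mul_one, smul_eq_mul]
    simp_rw [hBapp]
    rw [Finset.sum_boole, outdeg_eq T hDR a]
    push_cast [hs]; ring
  have hJB : J * B = (2*s+1) • J := by
    ext a b
    rw [Matrix.mul_apply, Matrix.smul_apply]
    simp only [hJ, Matrix.of_apply, one_mul, smul_eq_mul]
    simp_rw [hBapp]
    rw [Finset.sum_boole, indeg_eq T hDR b]
    push_cast [hs]; ring
  -- B * Bᵀ
  have hBBt : B * Bᵀ = (s+1) • (1 : Matrix (Fin (4*t+3)) (Fin (4*t+3)) ℤ) + s • J := by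
    ext a b
    rw [Matrix.mul_apply, Matrix.add_apply, Matrix.smul_apply, Matrix.smul_apply]
    simp only [Matrix.transpose_apply, hJ, Matrix.of_apply, smul_eq_mul, mul_one]
    have hterm : ∀ k, B a k * B b k = if (T.r a k ∧ T.r b k) then 1 else 0 := by
      intro k; rw [hBapp, hBapp]; split_ifs with h1 h2 h3 <;> simp_all
    simp_rw [hterm]
    rw [Finset.sum_boole]
    by_cases hab : a = b
    · subst hab
      have : (Finset.univ.filter fun k => T.r a k ∧ T.r a k) =
          Finset.univ.filter fun k => T.r a k := by simp
      rw [this, outdeg_eq T hDR a]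
      simp [Matrix.one_apply, hs]; ring
    · rw [common_card T hDR hab]
      simp [Matrix.one_apply, hab, hs]
  -- transpose relation
  have hBt : Bᵀ = J - 1 - B := by
    ext a b
    simp only [Matrix.transpose_apply, Matrix.sub_apply, hJ, Matrix.of_apply, Matrix.one_apply]
    rw [hBapp, hBapp]
    by_cases hab : a = b
    · subst hab; simp [T.irrefl a]
    · have ht := T.total a b hab
      by_cases h2 : T.r a b
      · simp [hab, h2, ht.mp h2]
      · have : T.r b a := by by_contra hc; exact h2 (ht.mpr hc)
        simp [hab, h2, this]
  -- powers
  have e2 : B * B = (s+1) • J - (s+1) • 1 - B := by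
    have h : B * Bᵀ = B * J - B - B * B := by
      rw [hBt]; noncomm_ring
    rw [hBBt] at h
    have h2 : B * B = B * J - B - ((s+1) • 1 + s • J) := by
      rw [h]; abel
    rw [hBJ] at h2
    rw [h2]; module
  have e3 : B * B * B = (2*s*(s+1)) • J + (s+1) • 1 - s • B := by
    calc B * B * B = ((s+1) • J - (s+1) • 1 - B) * B := by rw [e2]
      _ = (s+1) • (J * B) - (s+1) • B - B * B := by
          rw [sub_mul, sub_mul, smul_mul_assoc, smul_mul_assoc, one_mul]
      _ = (s+1) • ((2*s+1) • J) - (s+1) • B - ((s+1) • J - (s+1) • 1 - B) := by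
          rw [hJB, e2]
      _ = (2*s*(s+1)) • J + (s+1) • 1 - s • B := by module
  have e4 : B * B * B * B = (s*(s+1)*(4*s+1)) • J + (s*(s+1)) • 1 + (2*s+1) • B := by
    calc B * B * B * B = ((2*s*(s+1)) • J + (s+1) • 1 - s • B) * B := by rw [e3]
      _ = (2*s*(s+1)) • (J * B) + (s+1) • B - s • (B * B) := by
          rw [sub_mul, add_mul, smul_mul_assoc, smul_mul_assoc, smul_mul_assoc, one_mul]
      _ = (2*s*(s+1)) • ((2*s+1) • J) + (s+1) • B - s • ((s+1) • J - (s+1) • 1 - B) := by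
          rw [hJB, e2]
      _ = (s*(s+1)*(4*s+1)) • J + (s*(s+1)) • 1 + (2*s+1) • B := by module
  have e5 : B * B * B * B * B = ((s+1)*(2*s+1)*(4*s^2+s+1)) • J - ((s+1)*(2*s+1)) • 1
      + (s*(s+1) - (2*s+1)) • B := by
    calc B * B * B * B * B
        = ((s*(s+1)*(4*s+1)) • J + (s*(s+1)) • 1 + (2*s+1) • B) * B := by rw [e4]
      _ = (s*(s+1)*(4*s+1)) • (J * B) + (s*(s+1)) • B + (2*s+1) • (B * B) := by
          rw [add_mul, add_mul, smul_mul_assoc, smul_mul_assoc, smul_mul_assoc, one_mul]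
      _ = (s*(s+1)*(4*s+1)) • ((2*s+1) • J) + (s*(s+1)) • B
            + (2*s+1) • ((s+1) • J - (s+1) • 1 - B) := by rw [hJB, e2]
      _ = ((s+1)*(2*s+1)*(4*s^2+s+1)) • J - ((s+1)*(2*s+1)) • 1
            + (s*(s+1) - (2*s+1)) • B := by module
  -- cast back
  have hcast : ∀ p : ℕ, ((T.adj ^ p) i j : ℤ) = (B ^ p) i j := by
    intro p
    have : B ^ p = ((Nat.castRingHom ℤ).mapMatrix (T.adj ^ p)) := by
      rw [map_pow]; rfl
    rw [this]; rfl
  have h1app : (1 : Matrix (Fin (4*t+3)) (Fin (4*t+3)) ℤ) i j = 0 := by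
    simp [Matrix.one_apply, hij]
  have hJapp : J i j = 1 := rfl
  constructor
  · have : ((T.adj ^ 4) i j : ℤ) = ((t * (t + 1) * (4 * t + 1) : ℕ) : ℤ) := by
      rw [hcast 4]
      have : B ^ 4 = B * B * B * B := by
        rw [pow_succ, pow_succ, pow_succ, pow_one]
      rw [this, e4]
      simp only [Matrix.add_apply, Matrix.smul_apply, hJapp, h1app, hBij, smul_eq_mul]
      push_cast [hs]; ring
    exact_mod_cast this
  · have : ((T.adj ^ 5) i j : ℤ) = (((t + 1) * (2 * t + 1) * (4 * t ^ 2 + t + 1) : ℕ) : ℤ) := by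
      rw [hcast 5]
      have : B ^ 5 = B * B * B * B * B := by
        rw [pow_succ, pow_succ, pow_succ, pow_succ, pow_one]
      rw [this, e5]
      simp only [Matrix.add_apply, Matrix.sub_apply, Matrix.smul_apply, hJapp, h1app, hBij,
        smul_eq_mul]
      push_cast [hs]; ring
    exact_mod_cast this
end

section
/- Let T be a doubly-regular tournament of order 4t+3 with adjacency matrix A, and let (j,i) be an arc of T (i.e., j→i). Then (A⁶)_{ij} = t(t+1)(16t³+20t²+13t+4) and (A⁷)_{ij} = 2t(t+1)(16t⁴+28t³+23t²+9t+1). -/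
open Finset

theorem adj_sixth_seventh_power_entries_of_doubly_regular
    (t : ℕ) (T : Tournament (Fin (4 * t + 3)))
    (hDR : T.IsDoublyRegular t)
    (i j : Fin (4 * t + 3)) (harc : T.r j i) :
    (T.adj ^ 6) i j = t * (t + 1) * (16 * t ^ 3 + 20 * t ^ 2 + 13 * t + 4) ∧
    (T.adj ^ 7) i j =
      2 * t * (t + 1) * (16 * t ^ 4 + 28 * t ^ 3 + 23 * t ^ 2 + 9 * t + 1) := by
  classical
  -- integer adjacency matrix
  set B : Matrix (Fin (4 * t + 3)) (Fin (4 * t + 3)) ℤ :=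
    Matrix.of (fun a b => if T.r a b then 1 else 0) with hBdef
  have hB01 : ∀ a b, B a b = if T.r a b then 1 else 0 := fun _ _ => rfl
  have hBd : ∀ a, B a a = 0 := by intro a; simp [hB01, T.irrefl a]
  have hBpair : ∀ a b, B a b + B b a = if a = b then 0 else 1 := by
    intro a b
    by_cases h : a = b
    · subst h; simp [hBd]
    · have htot := T.total a b h
      simp only [hB01, if_neg h]
      by_cases hab : T.r a b
      · simp [hab, htot.mp hab]
      · have hba : T.r b a := by
          by_contra hn; exact hab (htot.mpr hn)
        simp [hab, hba]
  have hidem : ∀ a b, B a b * B a b = B a b := by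
    intro a b; simp only [hB01]; split <;> ring
  -- common out-neighbours
  have hcommon : ∀ a b, a ≠ b → ∑ k, B a k * B b k = (t : ℤ) := by
    intro a b hab
    have hc := hDR a b hab
    have h1 : Nat.card {k // T.r a k ∧ T.r b k}
        = (univ.filter fun k => T.r a k ∧ T.r b k).card := by
      rw [Nat.card_eq_fintype_card, Fintype.card_subtype]
    have h2 : ∑ k, B a k * B b k
        = ((univ.filter fun k => T.r a k ∧ T.r b k).card : ℤ) := by
      rw [Finset.card_filter]
      push_cast
      refine Finset.sum_congr rfl fun k _ => ?_
      by_cases h1 : T.r a k <;> by_cases h2 : T.r b k <;>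
        simp [hB01, h1, h2]
    rw [h2, ← h1, hc]
  -- helper: sum of the indicator of ≠ m
  have hne_sum : ∀ m : Fin (4 * t + 3), ∑ x, (if x = m then (0:ℤ) else 1) = 4*t+2 := by
    intro m
    have h : ∀ x : Fin (4 * t + 3),
        (if x = m then (0:ℤ) else 1) = 1 - (if x = m then 1 else 0) := by
      intro x; split <;> ring
    simp_rw [h]
    rw [Finset.sum_sub_distrib, Finset.sum_const, Finset.sum_ite_eq' univ m (fun _ => (1:ℤ))]
    simp only [Finset.card_univ, Fintype.card_fin, Finset.mem_univ, if_pos, nsmul_eq_mul,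
      mul_one]
    push_cast
    ring
  -- in-degrees
  set F : Fin (4 * t + 3) → ℤ := fun k => ∑ a, B a k with hFdef
  have hswap : ∑ k, ∑ a, B k a = ∑ k, F k := Finset.sum_comm
  have hsum : ∑ k, F k = (4*t+3) * (2*t+1) := by
    have h2 : (∑ k, F k) + (∑ k, F k) = ∑ k, ∑ a, (B a k + B k a) := by
      calc (∑ k, F k) + (∑ k, F k)
          = (∑ k, ∑ a, B a k) + (∑ k, ∑ a, B k a) := by rw [hswap]
        _ = ∑ k, ((∑ a, B a k) + (∑ a, B k a)) := Finset.sum_add_distrib.symm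
        _ = ∑ k, ∑ a, (B a k + B k a) :=
            Finset.sum_congr rfl fun k _ => Finset.sum_add_distrib.symm
    have h3 : ∑ k, ∑ a, (B a k + B k a) = ((4*t+3) : ℤ) * (4*t+2) := by
      have h4 : ∀ k, ∑ a, (B a k + B k a) = ((4*t+2 : ℤ)) := by
        intro k
        calc ∑ a, (B a k + B k a) = ∑ a, (if a = k then (0:ℤ) else 1) :=
              Finset.sum_congr rfl fun a _ => hBpair a k
          _ = 4*t+2 := hne_sum k
      rw [Finset.sum_congr rfl fun k _ => h4 k, Finset.sum_const, Finset.card_univ,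
        Fintype.card_fin, nsmul_eq_mul]
      push_cast
      ring
    rw [h3] at h2
    linarith
  have hsumsq : ∑ k, (F k)^2 = ((4*t+3) : ℤ) * (2*t+1)^2 := by
    have h1 : ∀ k, (F k)^2 = ∑ a, ∑ b, B a k * B b k := by
      intro k; rw [sq, hFdef]; exact Finset.sum_mul_sum _ _ _ _
    have h2 : ∑ k, (F k)^2 = ∑ a, ∑ b, ∑ k, B a k * B b k := by
      rw [Finset.sum_congr rfl fun k _ => h1 k]
      rw [Finset.sum_comm]
      exact Finset.sum_congr rfl fun a _ => Finset.sum_comm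
    have h3 : ∀ a b, ∑ k, B a k * B b k
        = (t : ℤ) + (if a = b then (∑ k, B a k) - t else 0) := by
      intro a b
      by_cases hab : a = b
      · subst hab
        rw [Finset.sum_congr rfl fun k _ => hidem a k, if_pos rfl]
        ring
      · rw [hcommon a b hab, if_neg hab]; ring
    have h4 : ∑ a, ∑ b, ∑ k, B a k * B b k
        = ∑ a, (((4*t+3 : ℤ)) * t + ((∑ k, B a k) - t)) := by
      refine Finset.sum_congr rfl fun a _ => ?_
      rw [Finset.sum_congr rfl fun b _ => h3 a b, Finset.sum_add_distrib,
        Finset.sum_const, Finset.card_univ, Fintype.card_fin,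
        Finset.sum_ite_eq univ a (fun _ => (∑ k, B a k) - (t:ℤ))]
      simp only [Finset.mem_univ, if_pos, nsmul_eq_mul]
      push_cast
      ring
    have h5 : ∑ a, (∑ k, B a k) = ∑ k, F k := hswap
    rw [h2, h4, Finset.sum_add_distrib, Finset.sum_sub_distrib, h5, hsum,
      Finset.sum_const, Finset.sum_const, Finset.card_univ, Fintype.card_fin,
      nsmul_eq_mul, nsmul_eq_mul]
    push_cast
    ring
  -- regularity of in-degrees
  have hF : ∀ k, F k = 2*t+1 := by
    have hz : ∑ k, (F k - (2*t+1))^2 = 0 := by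
      have h : ∀ k, (F k - (2*t+1))^2
          = (F k)^2 - (4*t+2) * F k + (2*t+1)^2 := by intro k; ring
      rw [Finset.sum_congr rfl fun k _ => h k, Finset.sum_add_distrib,
        Finset.sum_sub_distrib, ← Finset.mul_sum, hsumsq, hsum,
        Finset.sum_const, Finset.card_univ, Fintype.card_fin, nsmul_eq_mul]
      push_cast
      ring
    intro k
    have h1 := (Finset.sum_eq_zero_iff_of_nonneg
      (fun k _ => sq_nonneg (F k - (2*t+1)))).mp hz k (Finset.mem_univ k)
    have h2 := pow_eq_zero_iff (n := 2) (by norm_num) |>.mp h1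
    linarith
  have hIn : ∀ k, ∑ a, B a k = (2*t+1 : ℤ) := hF
  have hOut : ∀ a, ∑ k, B a k = (2*t+1 : ℤ) := by
    intro a
    have h : ∀ k, B a k = (if k = a then (0:ℤ) else 1) - B k a := by
      intro k
      have h1 := hBpair a k
      have h2 : (if a = k then (0:ℤ) else 1) = (if k = a then 0 else 1) := by
        simp [eq_comm]
      linarith [h2.le, h2.ge]
    rw [Finset.sum_congr rfl fun k _ => h k, Finset.sum_sub_distrib, hne_sum a, hIn a]
    ring
  -- the all-ones matrix
  set J : Matrix (Fin (4 * t + 3)) (Fin (4 * t + 3)) ℤ :=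
    Matrix.of (fun _ _ => (1:ℤ)) with hJdef
  have hJB : J * B = ((2*t+1 : ℤ)) • J := by
    ext a b
    simp only [Matrix.mul_apply, Matrix.smul_apply, hJdef, Matrix.of_apply, one_mul,
      smul_eq_mul, mul_one]
    exact hIn b
  have hBB : B * B = ((t : ℤ)+1) • J - ((t : ℤ)+1) • (1 : Matrix _ _ ℤ) - B := by
    ext a b
    simp only [Matrix.mul_apply, Matrix.sub_apply, Matrix.smul_apply, smul_eq_mul]
    have h : ∀ k, B a k * B k b
        = B a k * (if k = b then (0:ℤ) else 1) - B a k * B b k := by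
      intro k
      have h1 := hBpair k b
      have h2 : B k b = (if k = b then (0:ℤ) else 1) - B b k := by linarith
      rw [h2]; ring
    rw [Finset.sum_congr rfl fun k _ => h k, Finset.sum_sub_distrib]
    have h1 : ∑ k, B a k * (if k = b then (0:ℤ) else 1) = (2*t+1) - B a b := by
      have h2 : ∀ k, B a k * (if k = b then (0:ℤ) else 1)
          = B a k - (if k = b then B a k else 0) := by
        intro k; split <;> ring
      rw [Finset.sum_congr rfl fun k _ => h2 k, Finset.sum_sub_distrib, hOut a,
        Finset.sum_ite_eq' univ b (fun k => B a k)]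
      simp
    rw [h1]
    by_cases hab : a = b
    · subst hab
      rw [Finset.sum_congr rfl fun k _ => hidem a k, hOut a]
      simp [hJdef, Matrix.one_apply_eq, hBd]
    · rw [hcommon a b hab]
      simp only [hJdef, Matrix.of_apply, Matrix.one_apply_ne hab, mul_one, mul_zero]
      ring
  -- the key step lemma
  have hstep : ∀ a b c : ℤ, (a • J + b • (1 : Matrix _ _ ℤ) + c • B) * B
      = (a*(2*(t:ℤ)+1) + c*((t:ℤ)+1)) • J + (-(c*((t:ℤ)+1))) • (1 : Matrix _ _ ℤ)
        + (b - c) • B := by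
    intro a b c
    rw [add_mul, add_mul, smul_mul_assoc, smul_mul_assoc, smul_mul_assoc, hJB, one_mul, hBB]
    module
  have e1 : B ^ 1 = (0:ℤ) • J + (0:ℤ) • (1 : Matrix _ _ ℤ) + (1:ℤ) • B := by
    rw [pow_one]; module
  have e2 : B ^ 2 = ((t:ℤ)+1) • J + (-((t:ℤ)+1)) • (1 : Matrix _ _ ℤ) + (-1:ℤ) • B := by
    rw [pow_succ, e1, hstep]; match_scalars <;> ring
  have e3 : B ^ 3 = (2*(t:ℤ)*((t:ℤ)+1)) • J + ((t:ℤ)+1) • (1 : Matrix _ _ ℤ)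
      + (-(t:ℤ)) • B := by
    rw [pow_succ, e2, hstep]; match_scalars <;> ring
  have e4 : B ^ 4 = ((t:ℤ)*((t:ℤ)+1)*(4*(t:ℤ)+1)) • J
      + ((t:ℤ)*((t:ℤ)+1)) • (1 : Matrix _ _ ℤ) + (2*(t:ℤ)+1) • B := by
    rw [pow_succ, e3, hstep]; match_scalars <;> ring
  have e5 : B ^ 5 = (((t:ℤ)+1)*(2*(t:ℤ)+1)*(4*(t:ℤ)^2+(t:ℤ)+1)) • J
      + (-((2*(t:ℤ)+1)*((t:ℤ)+1))) • (1 : Matrix _ _ ℤ)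
      + ((t:ℤ)^2-(t:ℤ)-1) • B := by
    rw [pow_succ, e4, hstep]; match_scalars <;> ring
  have e6 : B ^ 6 = ((t:ℤ)*((t:ℤ)+1)*(16*(t:ℤ)^3+20*(t:ℤ)^2+13*(t:ℤ)+4)) • J
      + (-(((t:ℤ)+1)*((t:ℤ)^2-(t:ℤ)-1))) • (1 : Matrix _ _ ℤ)
      + (-(3*(t:ℤ)^2+2*(t:ℤ))) • B := by
    rw [pow_succ, e5, hstep]; match_scalars <;> ring
  have e7 : B ^ 7 = (2*(t:ℤ)*((t:ℤ)+1)*(16*(t:ℤ)^4+28*(t:ℤ)^3+23*(t:ℤ)^2+9*(t:ℤ)+1)) • J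
      + (((t:ℤ)+1)*(3*(t:ℤ)^2+2*(t:ℤ))) • (1 : Matrix _ _ ℤ)
      + (-(((t:ℤ)+1)*((t:ℤ)^2-(t:ℤ)-1)) + 3*(t:ℤ)^2+2*(t:ℤ)) • B := by
    rw [pow_succ, e6, hstep]; match_scalars <;> ring
  -- entries at (i, j)
  have hne : i ≠ j := by
    intro h; exact T.irrefl j (h ▸ harc)
  have hBij : B i j = 0 := by
    have htot := T.total i j hne
    have hnr : ¬ T.r i j := fun h => (htot.mp h) harc
    simp [hB01, hnr]
  have entry : ∀ a b c : ℤ,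
      (a • J + b • (1 : Matrix (Fin (4 * t + 3)) (Fin (4 * t + 3)) ℤ) + c • B) i j = a := by
    intro a b c
    rw [Matrix.add_apply, Matrix.add_apply, Matrix.smul_apply, Matrix.smul_apply,
      Matrix.smul_apply, Matrix.one_apply_ne hne, hBij]
    simp [hJdef]
  -- relating B to T.adj
  have hBmap : B = (Nat.castRingHom ℤ).mapMatrix T.adj := by
    ext a b
    simp [hBdef, Tournament.adj, apply_ite (Nat.cast : ℕ → ℤ)]
  have hcast : ∀ p : ℕ, ((T.adj ^ p) i j : ℤ) = (B ^ p) i j := by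
    intro p
    rw [hBmap, ← map_pow]
    simp [RingHom.mapMatrix_apply, Matrix.map_apply]
  constructor
  · have h6 : ((T.adj ^ 6) i j : ℤ)
        = (t:ℤ)*((t:ℤ)+1)*(16*(t:ℤ)^3+20*(t:ℤ)^2+13*(t:ℤ)+4) := by
      rw [hcast 6, e6, entry]
    have h6' : ((t * (t + 1) * (16 * t ^ 3 + 20 * t ^ 2 + 13 * t + 4) : ℕ) : ℤ)
        = (t:ℤ)*((t:ℤ)+1)*(16*(t:ℤ)^3+20*(t:ℤ)^2+13*(t:ℤ)+4) := by push_cast; ring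
    exact_mod_cast h6.trans h6'.symm
  · have h7 : ((T.adj ^ 7) i j : ℤ)
        = 2*(t:ℤ)*((t:ℤ)+1)*(16*(t:ℤ)^4+28*(t:ℤ)^3+23*(t:ℤ)^2+9*(t:ℤ)+1) := by
      rw [hcast 7, e7, entry]
    have h7' : ((2 * t * (t + 1) * (16 * t ^ 4 + 28 * t ^ 3 + 23 * t ^ 2 + 9 * t + 1) : ℕ) : ℤ)
        = 2*(t:ℤ)*((t:ℤ)+1)*(16*(t:ℤ)^4+28*(t:ℤ)^3+23*(t:ℤ)^2+9*(t:ℤ)+1) := by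
      push_cast; ring
    exact_mod_cast h7.trans h7'.symm
end

section
/- For each odd n ≥ 1, write δ = (n−1)/2 and let N⁺(0), N⁻(0) be the out-set and in-set of vertex 0 in RLT_n. The number of ordered pairs (γ₁, γ₂), where γ₁ is a 3-cycle through 0, γ₂ is a 5-cycle through 0, and the (unique) vertex of γ₁ lying in N⁺(0) also lies on γ₂, equals (δ−1)δ(δ+1)(22δ²−15δ−18)/40. -/
/-!
Write `n = 2δ + 1`. Relabel the non-zero vertices of `RLT_n` as `p⁺ = p + 1` and
`q⁻ = δ + 1 + q` with `p, q < δ`, so that `N⁺(0) = {p⁺}` and `N⁻(0) = {q⁻}`. The arcs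
among them are `p⁺ → p'⁺ ⇔ p < p'`, `q⁻ → q'⁻ ⇔ q < q'`, `p⁺ → q⁻ ⇔ q ≤ p` and
`q⁻ → p⁺ ⇔ p < q`.

A 3-cycle through `0` is `0 → p⁺ → q⁻ → 0` with `q ≤ p`, so exactly `p + 1` of them have
out-vertex `p⁺`, and the condition on the pair only asks that this out-vertex lies on the
5-cycle. Hence the number of pairs is the sum, over all 5-cycles through `0`, of the weights
`p + 1` of their vertices `p⁺`. A 5-cycle through `0` is a closed walk
`0 → p⁺ → y₂ → y₃ → q⁻ → 0` (in a tournament, closed walks of length at most 5 are cycles);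
splitting according to the signs of `y₂` and `y₃` leaves four iterated sums over `Fin δ`
constrained by order relations, which are polynomials of degree 5 in `δ`.
-/

open Finset

section BasedCycle

variable {α : Type*} {r : α → α → Prop} {z : α}

def IsBasedCycle (r : α → α → Prop) (z : α) {m : ℕ} [NeZero m] (v : Fin m → α) : Prop :=
  v 0 = z ∧ Function.Injective v ∧ ∀ k, r (v k) (v (k + 1))

def CyclePairsSharingOutNeighbor (r : α → α → Prop) (z : α) : Type _ :=
  {p : (Fin 3 → α) × (Fin 5 → α) // IsBasedCycle r z p.1 ∧ IsBasedCycle r z p.2 ∧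
    ∀ x : α, x ∈ Set.range p.1 → r z x → x ∈ Set.range p.2}

section RelIso

variable {β : Type*} {s : β → β → Prop}

lemma RelIso.isBasedCycle_comp_iff (e : r ≃r s) {m : ℕ} [NeZero m] {v : Fin m → α} :
    IsBasedCycle s (e z) (e ∘ v) ↔ IsBasedCycle r z v := by
  simp only [IsBasedCycle, Function.comp_apply, e.injective.eq_iff, e.injective.of_comp_iff,
    e.map_rel_iff]

lemma RelIso.forall_mem_range_comp_iff {ι κ : Type*} (e : r ≃r s) {v : ι → α} {w : κ → α} :
    (∀ x, x ∈ Set.range (e ∘ v) → s (e z) x → x ∈ Set.range (e ∘ w)) ↔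
      ∀ x, x ∈ Set.range v → r z x → x ∈ Set.range w := by
  simp only [Set.range_comp, Set.forall_mem_image, e.map_rel_iff, e.injective.mem_set_image]

def RelIso.cyclePairsSharingOutNeighborEquiv (e : r ≃r s) (z : α) :
    CyclePairsSharingOutNeighbor r z ≃ CyclePairsSharingOutNeighbor s (e z) :=
  (((Equiv.refl _).arrowCongr e.toEquiv).prodCongr
      ((Equiv.refl _).arrowCongr e.toEquiv)).subtypeEquiv fun p => by
    change _ ↔ IsBasedCycle s (e z) (e ∘ p.1) ∧ IsBasedCycle s (e z) (e ∘ p.2) ∧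
      ∀ x, x ∈ Set.range (e ∘ p.1) → s (e z) x → x ∈ Set.range (e ∘ p.2)
    rw [e.isBasedCycle_comp_iff, e.isBasedCycle_comp_iff, e.forall_mem_range_comp_iff]

end RelIso

variable [Std.Asymm r]

lemma injective_of_rel_succ {m : ℕ} [NeZero m]
    (hm : ∀ i j : Fin m, i = j ∨ j = i + 1 ∨ i = j + 1 ∨ j = i + 1 + 1 ∨ i = j + 1 + 1)
    {v : Fin m → α} (hv : ∀ k, r (v k) (v (k + 1))) : Function.Injective v := by
  have step : ∀ k, v k ≠ v (k + 1) := fun k h => irrefl_of r (v k) (h ▸ hv k)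
  have two_steps : ∀ k, v k ≠ v (k + 1 + 1) := fun k h =>
    asymm_of r (hv k) (h ▸ hv (k + 1))
  intro i j hij
  rcases hm i j with h | rfl | rfl | rfl | rfl
  · exact h
  · exact absurd hij (step i)
  · exact absurd hij.symm (step j)
  · exact absurd hij (two_steps i)
  · exact absurd hij.symm (two_steps j)

lemma isBasedCycle_three_iff {v : Fin 3 → α} :
    IsBasedCycle r z v ↔ v 0 = z ∧ r (v 0) (v 1) ∧ r (v 1) (v 2) ∧ r (v 2) (v 0) := by
  refine ⟨fun ⟨h0, _, hv⟩ => ⟨h0, hv 0, hv 1, hv 2⟩, fun ⟨h0, h01, h12, h20⟩ => ?_⟩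
  have hv : ∀ k, r (v k) (v (k + 1)) := by
    intro k
    fin_cases k
    exacts [h01, h12, h20]
  exact ⟨h0, injective_of_rel_succ (by decide) hv, hv⟩

lemma isBasedCycle_five_iff {w : Fin 5 → α} :
    IsBasedCycle r z w ↔ w 0 = z ∧ r (w 0) (w 1) ∧ r (w 1) (w 2) ∧ r (w 2) (w 3) ∧
      r (w 3) (w 4) ∧ r (w 4) (w 0) := by
  refine ⟨fun ⟨h0, _, hw⟩ => ⟨h0, hw 0, hw 1, hw 2, hw 3, hw 4⟩,
    fun ⟨h0, h01, h12, h23, h34, h40⟩ => ?_⟩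
  have hw : ∀ k, r (w k) (w (k + 1)) := by
    intro k
    fin_cases k
    exacts [h01, h12, h23, h34, h40]
  exact ⟨h0, injective_of_rel_succ (by decide) hw, hw⟩

lemma IsBasedCycle.forall_mem_range_rel_imp_iff {v : Fin 3 → α} (hv : IsBasedCycle r z v)
    {S : Set α} : (∀ x, x ∈ Set.range v → r z x → x ∈ S) ↔ v 1 ∈ S := by
  obtain ⟨h0, h01, -, h20⟩ := isBasedCycle_three_iff.1 hv
  subst h0
  refine ⟨fun h => h _ ⟨1, rfl⟩ h01, ?_⟩
  rintro h _ ⟨i, rfl⟩ hi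
  fin_cases i
  · exact absurd hi (irrefl_of r _)
  · exact h
  · exact absurd hi (asymm_of r h20)

variable [Fintype α]

open scoped Classical in
theorem card_cyclePairsSharingOutNeighbor [DecidableEq α] (z : α) :
    Nat.card (CyclePairsSharingOutNeighbor r z) = ∑ w : Fin 5 → α with IsBasedCycle r z w,
      ∑ i, #{v : Fin 3 → α | IsBasedCycle r z v ∧ v 1 = w i} := by
  unfold CyclePairsSharingOutNeighbor
  rw [Nat.card_eq_fintype_card, Fintype.card_subtype, card_filter, Fintype.sum_prod_type_right,
    sum_filter]
  refine sum_congr rfl fun w _ => ?_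
  split_ifs with hw
  · rw [← card_filter]
    calc _ = #{v : Fin 3 → α | IsBasedCycle r z v ∧ v 1 ∈ univ.image w} := by
          refine congrArg card (filter_congr fun v _ => ?_)
          rw [mem_image_univ_iff_mem_range]
          exact ⟨fun ⟨h3, _, h⟩ => ⟨h3, h3.forall_mem_range_rel_imp_iff.1 h⟩,
            fun ⟨h3, h⟩ => ⟨h3, hw, h3.forall_mem_range_rel_imp_iff.2 h⟩⟩
      _ = ∑ x ∈ univ.image w, #{v : Fin 3 → α | IsBasedCycle r z v ∧ v 1 = x} := by
          rw [card_eq_sum_card_fiberwise (f := fun v => v 1) fun v hv => (mem_filter.1 hv).2.2]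
          simp only [filter_filter]
          refine sum_congr rfl fun x hx => congrArg card (filter_congr fun v _ => ?_)
          exact ⟨fun h => ⟨h.1.1, h.2⟩, fun h => ⟨⟨h.1, h.2 ▸ hx⟩, h.2⟩⟩
      _ = _ := sum_image fun i _ j _ h => hw.2.1 h
  · exact sum_eq_zero fun v _ => if_neg fun h => hw h.2.1

open scoped Classical in
lemma card_isBasedCycle_three_apply_one [DecidableEq α] [DecidableRel r] (x : α) :
    #{v : Fin 3 → α | IsBasedCycle r z v ∧ v 1 = x} = #{b | r z x ∧ r x b ∧ r b z} := by
  refine card_nbij' (· 2) (fun b => ![z, x, b]) ?_ ?_ ?_ ?_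
  · simp only [coe_filter, mem_univ, true_and, isBasedCycle_three_iff]
    rintro v ⟨⟨rfl, h01, h12, h20⟩, rfl⟩
    exact ⟨h01, h12, h20⟩
  · simp only [coe_filter, mem_univ, true_and, isBasedCycle_three_iff]
    rintro b ⟨hx, hb, hbz⟩
    exact ⟨⟨rfl, hx, hb, hbz⟩, rfl⟩
  · simp only [coe_filter, mem_univ, true_and]
    rintro v ⟨⟨h0, -⟩, rfl⟩
    funext i
    fin_cases i <;> simp [h0]
  · exact fun _ _ => rfl

open scoped Classical in
lemma sum_isBasedCycle_five [DecidableRel r] {M : Type*} [AddCommMonoid M]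
    (F : (Fin 5 → α) → M) :
    ∑ w : Fin 5 → α with IsBasedCycle r z w, F w =
      ∑ y : α × α × α × α with r z y.1 ∧ r y.1 y.2.1 ∧ r y.2.1 y.2.2.1 ∧ r y.2.2.1 y.2.2.2 ∧
        r y.2.2.2 z, F ![z, y.1, y.2.1, y.2.2.1, y.2.2.2] := by
  have hz : ∀ w : Fin 5 → α, w 0 = z → ![z, w 1, w 2, w 3, w 4] = w := fun w h0 => by
    funext i
    fin_cases i <;> simp [h0]
  refine sum_nbij' (fun w => (w 1, w 2, w 3, w 4)) (fun y => ![z, y.1, y.2.1, y.2.2.1, y.2.2.2])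
    ?_ ?_ (fun w hw => hz w (mem_filter.1 hw).2.1) (fun _ _ => rfl)
    (fun w hw => by rw [hz w (mem_filter.1 hw).2.1])
  · simp only [mem_filter, mem_univ, true_and, isBasedCycle_five_iff]
    rintro w ⟨rfl, h⟩
    exact h
  · simp only [mem_filter, mem_univ, true_and, isBasedCycle_five_iff]
    exact fun y hy => ⟨rfl, hy⟩

end BasedCycle

lemma sum_range_natCast (m : ℕ) : ∑ k ∈ range m, (k : ℚ) = m * (m - 1) / 2 := by
  induction m with
  | zero => simp
  | succ m ih => rw [sum_range_succ, ih]; push_cast; ring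

lemma sum_range_natCast_sq (m : ℕ) :
    ∑ k ∈ range m, (k : ℚ) ^ 2 = m * (m - 1) * (2 * m - 1) / 6 := by
  induction m with
  | zero => simp
  | succ m ih => rw [sum_range_succ, ih]; push_cast; ring

lemma sum_range_natCast_cube (m : ℕ) : ∑ k ∈ range m, (k : ℚ) ^ 3 = (m * (m - 1) / 2) ^ 2 := by
  induction m with
  | zero => simp
  | succ m ih => rw [sum_range_succ, ih]; push_cast; ring

lemma sum_range_natCast_pow_four (m : ℕ) :
    ∑ k ∈ range m, (k : ℚ) ^ 4 = m * (m - 1) * (2 * m - 1) * (3 * m ^ 2 - 3 * m - 1) / 30 := by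
  induction m with
  | zero => simp
  | succ m ih => rw [sum_range_succ, ih]; push_cast; ring

namespace Fin

variable {M : Type*} {n : ℕ}

lemma sum_ite_lt [AddCommMonoid M] (b : Fin n) (f : Fin n → M) :
    ∑ x, (if x < b then f x else 0) = ∑ x ∈ Iio b, f x := by
  rw [← sum_filter, filter_gt_eq_Iio]

lemma sum_ite_le [AddCommMonoid M] (b : Fin n) (f : Fin n → M) :
    ∑ x, (if x ≤ b then f x else 0) = ∑ x ∈ Iic b, f x := by
  rw [← sum_filter, filter_ge_eq_Iic]

lemma sum_ite_gt [AddCommGroup M] (b : Fin n) (f : Fin n → M) :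
    ∑ x, (if b < x then f x else 0) = ∑ x, f x - ∑ x ∈ Iic b, f x := by
  rw [eq_sub_iff_add_eq, ← sum_ite_le, ← sum_add_distrib]
  exact sum_congr rfl fun x _ => by split_ifs with h h' <;> simp_all [not_lt_of_ge]

lemma sum_univ_natCast_pow (k : ℕ) :
    ∑ x : Fin n, ((x : ℕ) : ℚ) ^ k = ∑ j ∈ range n, (j : ℚ) ^ k :=
  sum_univ_eq_sum_range (fun j => (j : ℚ) ^ k) n

lemma sum_Iio_natCast_pow (b : Fin n) (k : ℕ) :
    ∑ x ∈ Iio b, ((x : ℕ) : ℚ) ^ k = ∑ j ∈ range b, (j : ℚ) ^ k := by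
  rw [← Nat.Iio_eq_range, ← map_valEmbedding_Iio, sum_map]
  rfl

lemma sum_Iic_natCast_pow (b : Fin n) (k : ℕ) :
    ∑ x ∈ Iic b, ((x : ℕ) : ℚ) ^ k = ∑ j ∈ range (b + 1), (j : ℚ) ^ k := by
  rw [Nat.range_succ_eq_Iic, ← map_valEmbedding_Iic, sum_map]
  rfl

lemma sum_univ_natCast : ∑ x : Fin n, ((x : ℕ) : ℚ) = ∑ j ∈ range n, (j : ℚ) := by
  simpa using sum_univ_natCast_pow (n := n) 1

lemma sum_Iio_natCast (b : Fin n) : ∑ x ∈ Iio b, ((x : ℕ) : ℚ) = ∑ j ∈ range b, (j : ℚ) := by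
  simpa using sum_Iio_natCast_pow b 1

lemma sum_Iic_natCast (b : Fin n) :
    ∑ x ∈ Iic b, ((x : ℕ) : ℚ) = ∑ j ∈ range (b + 1), (j : ℚ) := by
  simpa using sum_Iic_natCast_pow b 1

end Fin

lemma rltAdj_natCast_iff {δ a b : ℕ} (ha : a < 2 * δ + 1) (hb : b < 2 * δ + 1) :
    rltAdj (2 * δ + 1) a b ↔ (a < b ∧ b ≤ a + δ) ∨ b + δ < a := by
  have hval : ((b : ZMod (2 * δ + 1)) - a).val =
      if a ≤ b then b - a else b + (2 * δ + 1) - a := by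
    split_ifs with hab
    · rw [← Nat.cast_sub hab, ZMod.val_cast_of_lt (by omega)]
    · rw [← ZMod.val_cast_of_lt (n := 2 * δ + 1) (a := b + (2 * δ + 1) - a) (by omega),
        Nat.cast_sub (by omega), Nat.cast_add, ZMod.natCast_self, add_zero]
  rw [rltAdj, hval, mem_Icc, show (2 * δ + 1 - 1) / 2 = δ by omega]
  split_ifs <;> omega

namespace RLT

/-- The vertices of `RLT_{2δ+1}`: `none` is `0`, `some (inl p)` is `p + 1 ∈ N⁺(0)` and
`some (inr q)` is `δ + 1 + q ∈ N⁻(0)`. -/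
abbrev Vertex (δ : ℕ) := Option (Fin δ ⊕ Fin δ)

variable {δ : ℕ}

def label : Vertex δ → ℕ
  | none => 0
  | some (.inl p) => p + 1
  | some (.inr q) => δ + 1 + q

def Arc : Vertex δ → Vertex δ → Prop
  | none, none => False
  | none, some (.inl _) => True
  | none, some (.inr _) => False
  | some (.inl _), none => False
  | some (.inl p), some (.inl p') => p < p'
  | some (.inl p), some (.inr q) => q ≤ p
  | some (.inr _), none => True
  | some (.inr q), some (.inl p) => p < q
  | some (.inr q), some (.inr q') => q < q'

instance : DecidableRel (Arc (δ := δ)) := fun x y => by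
  rcases x with _ | p | q <;> rcases y with _ | p' | q' <;> unfold Arc <;> infer_instance

instance : Std.Asymm (Arc (δ := δ)) where
  asymm x y := by
    rcases x with _ | p | q <;> rcases y with _ | p' | q' <;>
      simp only [Arc, Fin.lt_def, Fin.le_def, not_false_eq_true, implies_true, false_implies] <;>
      omega

lemma label_lt (x : Vertex δ) : label x < 2 * δ + 1 := by
  rcases x with _ | p | q <;> simp only [label] <;> omega

lemma label_injective : Function.Injective (label (δ := δ)) := by
  intro x y h
  rcases x with _ | p | q <;> rcases y with _ | p' | q' <;> simp only [label] at h <;>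
    first
      | rfl
      | omega
      | simp only [Option.some.injEq, Sum.inl.injEq, Sum.inr.injEq, Fin.ext_iff]; omega

lemma rltAdj_label_iff (x y : Vertex δ) :
    rltAdj (2 * δ + 1) (label x) (label y) ↔ Arc x y := by
  rw [rltAdj_natCast_iff (label_lt x) (label_lt y)]
  rcases x with _ | p | q <;> rcases y with _ | p' | q' <;>
    simp only [label, Arc, Fin.lt_def, Fin.le_def, iff_true, iff_false] <;> omega

lemma bijective_natCast_label :
    Function.Bijective fun x : Vertex δ => (label x : ZMod (2 * δ + 1)) := by
  refine (Fintype.bijective_iff_injective_and_card _).2 ⟨fun x y h => label_injective ?_, ?_⟩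
  · simpa only [ZMod.val_cast_of_lt (label_lt _)] using congrArg ZMod.val h
  · simp only [Fintype.card_option, Fintype.card_sum, Fintype.card_fin, ZMod.card]
    ring

noncomputable def relIso : Arc (δ := δ) ≃r rltAdj (2 * δ + 1) where
  toEquiv := Equiv.ofBijective _ bijective_natCast_label
  map_rel_iff' := rltAdj_label_iff _ _

def weight : Vertex δ → ℕ
  | some (.inl p) => p + 1
  | _ => 0

lemma card_triangles_eq_weight (x : Vertex δ) :
    #{b | Arc none x ∧ Arc x b ∧ Arc b none} = weight x := by
  rcases x with _ | p | q
  · simp [Arc, weight]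
  · rw [card_filter, Fintype.sum_option, Fintype.sum_sum_type]
    simp [Arc, weight, filter_ge_eq_Iic]
  · simp [Arc, weight]

theorem card_cyclePairsSharingOutNeighbor_arc_eq_sum :
    Nat.card (CyclePairsSharingOutNeighbor (Arc (δ := δ)) none) =
      ∑ y : Vertex δ × Vertex δ × Vertex δ × Vertex δ with Arc none y.1 ∧ Arc y.1 y.2.1 ∧
        Arc y.2.1 y.2.2.1 ∧ Arc y.2.2.1 y.2.2.2 ∧ Arc y.2.2.2 none,
        (weight y.1 + weight y.2.1 + weight y.2.2.1 + weight y.2.2.2) := by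
  rw [card_cyclePairsSharingOutNeighbor, sum_isBasedCycle_five]
  refine sum_congr rfl fun y _ => ?_
  simp only [card_isBasedCycle_three_apply_one, card_triangles_eq_weight, Fin.sum_univ_five]
  simp [weight]

theorem sum_sign_patterns :
    (∑ p₁ : Fin δ, ∑ p₂ : Fin δ, ∑ p₃ : Fin δ, ∑ q : Fin δ,
      if p₁ < p₂ ∧ p₂ < p₃ ∧ q ≤ p₃ then (p₁ + 1 + (p₂ + 1) + (p₃ + 1) : ℚ) else 0) =
        (δ - 2) * (δ - 1) * δ * (δ + 1) * (4 * δ + 3) / 20 ∧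
    (∑ p₁ : Fin δ, ∑ p₂ : Fin δ, ∑ q₃ : Fin δ, ∑ q : Fin δ,
      if p₁ < p₂ ∧ q₃ ≤ p₂ ∧ q₃ < q then (p₁ + 1 + (p₂ + 1) : ℚ) else 0) =
        (δ - 1) * δ * (δ + 1) * (9 * δ ^ 2 - 5 * δ - 6) / 40 ∧
    (∑ p₁ : Fin δ, ∑ q₂ : Fin δ, ∑ q₃ : Fin δ, ∑ q : Fin δ,
      if q₂ ≤ p₁ ∧ q₂ < q₃ ∧ q₃ < q then (p₁ + 1 : ℚ) else 0) =
        (δ - 2) * (δ - 1) * δ * (δ + 1) * (3 * δ + 1) / 40 ∧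
    (∑ p₁ : Fin δ, ∑ q₂ : Fin δ, ∑ p₃ : Fin δ, ∑ q : Fin δ,
      if q₂ ≤ p₁ ∧ p₃ < q₂ ∧ q ≤ p₃ then (p₁ + 1 + (p₃ + 1) : ℚ) else 0) =
        (δ - 1) * δ * (δ + 1) * (δ + 2) * (2 * δ + 1) / 40 := by
  refine ⟨?_, ?_, ?_, ?_⟩ <;>
  · simp only [ite_and, sum_ite_irrel, sum_const_zero, Fin.sum_ite_lt, Fin.sum_ite_le,
      Fin.sum_ite_gt]
    -- Each round evaluates the innermost sums: once `ring_nf` has expanded the summands into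
    -- monomials in the summation variable, they are power sums over an initial segment.
    repeat
      simp only [← mul_sum, ← sum_mul, sum_add_distrib, sum_sub_distrib, sum_const, card_univ,
        Fintype.card_fin, Fin.card_Iio, Fin.card_Iic, Nat.cast_add,
        Fin.sum_univ_natCast_pow, Fin.sum_Iio_natCast_pow, Fin.sum_Iic_natCast_pow,
        Fin.sum_univ_natCast, Fin.sum_Iio_natCast, Fin.sum_Iic_natCast, sum_range_natCast,
        sum_range_natCast_sq, sum_range_natCast_cube, sum_range_natCast_pow_four]
      ring_nf

theorem card_cyclePairsSharingOutNeighbor_arc :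
    (Nat.card (CyclePairsSharingOutNeighbor (Arc (δ := δ)) none) : ℚ) =
      (δ - 1) * δ * (δ + 1) * (22 * δ ^ 2 - 15 * δ - 18) / 40 := by
  obtain ⟨hpp, hpm, hmm, hmp⟩ := sum_sign_patterns (δ := δ)
  rw [card_cyclePairsSharingOutNeighbor_arc_eq_sum, Nat.cast_sum, sum_filter]
  simp only [Fintype.sum_prod_type, Fintype.sum_option, Fintype.sum_sum_type]
  simp only [Arc, weight, true_and, and_true, false_and, and_false, if_false, sum_const_zero,
    add_zero, zero_add, Nat.cast_zero, Nat.cast_add, Nat.cast_one, sum_add_distrib]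
  rw [hpp, hpm, hmm, hmp]
  ring

theorem card_cyclePairsSharingOutNeighbor_rltAdj :
    (Nat.card (CyclePairsSharingOutNeighbor (rltAdj (2 * δ + 1)) 0) : ℚ) =
      (δ - 1) * δ * (δ + 1) * (22 * δ ^ 2 - 15 * δ - 18) / 40 := by
  have h0 : relIso (δ := δ) none = 0 := by simp [relIso, label]
  rw [← h0, ← Nat.card_congr (relIso.cyclePairsSharingOutNeighborEquiv none),
    card_cyclePairsSharingOutNeighbor_arc]

end RLT

theorem pairs_three_five_cycles_sharing_outneighbor_of_RLT_general
    (n : ℕ) (hodd : Odd n) (δ : ℕ) (hδ : δ = (n - 1) / 2) :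
    40 * (Nat.card {p : (Fin 3 → ZMod n) × (Fin 5 → ZMod n) //
        IsBasedCycleAtZero n 3 p.1 ∧ IsBasedCycleAtZero n 5 p.2 ∧
        ∀ x : ZMod n, x ∈ Set.range p.1 → rltAdj n 0 x → x ∈ Set.range p.2} : ℤ)
      = ((δ : ℤ) - 1) * (δ : ℤ) * ((δ : ℤ) + 1) *
          (22 * (δ : ℤ) ^ 2 - 15 * (δ : ℤ) - 18) := by
  obtain rfl : n = 2 * δ + 1 := by
    obtain ⟨m, rfl⟩ := hodd
    omega
  have key : (40 : ℚ) * Nat.card (CyclePairsSharingOutNeighbor (rltAdj (2 * δ + 1)) 0) =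
      ((δ : ℚ) - 1) * δ * (δ + 1) * (22 * δ ^ 2 - 15 * δ - 18) := by
    rw [RLT.card_cyclePairsSharingOutNeighbor_rltAdj]
    ring
  qify
  exact key

/-- Pairs (3-cycle through 0, 5-cycle through 0) such that every vertex of the 3-cycle
lying in the out-set `N⁺(0)` (in fact there is exactly one such vertex) also lies
on the 5-cycle. -/
theorem pairs_three_five_cycles_sharing_outneighbor_of_RLT
    (n : ℕ) (hodd : Odd n) (hn : 1 ≤ n) (δ : ℕ) (hδ : δ = (n - 1) / 2) :
    40 * (Nat.card {p : (Fin 3 → ZMod n) × (Fin 5 → ZMod n) //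
        IsBasedCycleAtZero n 3 p.1 ∧ IsBasedCycleAtZero n 5 p.2 ∧
        ∀ x : ZMod n, x ∈ Set.range p.1 → rltAdj n 0 x → x ∈ Set.range p.2} : ℤ)
      = ((δ : ℤ) - 1) * (δ : ℤ) * ((δ : ℤ) + 1) *
          (22 * (δ : ℤ) ^ 2 - 15 * (δ : ℤ) - 18) :=
  pairs_three_five_cycles_sharing_outneighbor_of_RLT_general n hodd δ hδ
end
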